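/- arXiv:0809.4810 — 4 statements merged into one kernel-verified Lean document; each statement's English description precedes it below -/
import Mathlib

section
/- Let E be a free A-module over A = ℤ[u,u⁻¹] with basis {t_i : i ∈ I} and an involution bar : E → E satisfying bar(a·t) = bar(a)·bar(t) for a ∈ A (where bar on A sends u to u⁻¹). Suppose (I,≺) is a poset such that for every j ∈ I the set {i ∈ I : i ≺ j} is finite and bar(t_j) ≡ t_j modulo the A-span of {t_i : i ≺ j}, so that by Du's theorem the IC basis {c_i : i ∈ I} of E exists. If I′ is a lower order ideal of (I,≺) and E′ is the A-span of {t_i : i ∈ I′}, then the IC basis of E′ (with respect to the restricted involution and standard basis {t_i : i ∈ I′}) exists and equals {c_i : i ∈ I′}, a subset of the IC basis of E. -/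
/-!
The coordinates of `c i - t i` lie in `u⁻¹ℤ[u⁻¹]`, and `c i - t i` is bar-invariant modulo
`A{t k : k < i}`. If some coordinate outside the lower ideal `I′` were nonzero, take a maximal
such index `j`: triangularity of `bar` shows that the `j`-th coordinate of `bar (c i - t i)` is
the bar of the `j`-th coordinate of `c i - t i`, so that coordinate is a bar-invariant element
of `u⁻¹ℤ[u⁻¹]`, hence zero. Thus `c i ∈ E′` and `c i ≡ t i` modulo the lattice of `E′`.
Uniqueness in `E′` follows from uniqueness in `E` by extending a competitor by `c` off `I′`.
-/

noncomputable section

open LaurentPolynomial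

/-- The ring `A = ℤ[u, u⁻¹]` of Laurent polynomials over `ℤ`; `u` is `T 1`. -/
abbrev A : Type := LaurentPolynomial ℤ

/-- The bar involution on `A`, determined by `u ↦ u⁻¹` (i.e. `T n ↦ T (-n)`). -/
def Abar : A →+* A :=
  (invert : LaurentPolynomial ℤ ≃ₐ[ℤ] LaurentPolynomial ℤ).toAlgHom.toRingHom

/-- The lattice `u⁻¹ ⋅ (A⁻-span of the family t)`, realized as the `ℤ`-span of the
elements `u⁻ᵏ • t i` with `k ≥ 1`.  (Here `A⁻ = ℤ[u⁻¹]`.) -/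
def uinvLattice {I E : Type*} [AddCommGroup E] [Module A E] (t : I → E) : Submodule ℤ E :=
  Submodule.span ℤ {x | ∃ (k : ℕ) (i : I), x = (T (-(k : ℤ) - 1) : A) • t i}

/-- `c` is the IC (canonical) basis for the standard basis `t` and involution `bar`:
each `c i` is `bar`-invariant and congruent to `t i` modulo `u⁻¹ ⋅ A⁻{t i}`, and `c` is the
unique family with these two properties (equivalently, the unique `bar`-invariant basis of
the lattice `A⁻{t i}` congruent to the standard basis mod `u⁻¹` times the lattice). -/
structure IsICBasis {I E : Type*} [AddCommGroup E] [Module A E]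
    (bar : E → E) (t : I → E) (c : I → E) : Prop where
  bar_invariant : ∀ i, bar (c i) = c i
  congruent : ∀ i, c i - t i ∈ uinvLattice t
  unique : ∀ d : I → E, (∀ i, bar (d i) = d i) → (∀ i, d i - t i ∈ uinvLattice t) → d = c

/-- `u⁻¹A⁻ = u⁻¹ℤ[u⁻¹]` in the notation of the paper. -/
abbrev uinvAminus : Submodule ℤ A := AddMonoidAlgebra.supported ℤ ℤ (Set.Iio 0)

lemma T_mem_uinvAminus {n : ℤ} (hn : n < 0) : (T n : A) ∈ uinvAminus :=
  AddMonoidAlgebra.mem_supported'.2 fun m hm => by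
    rw [T_apply, if_neg]
    rintro rfl
    exact hm hn

lemma eq_zero_of_mem_uinvAminus_of_Abar_eq {a : A} (ha : a ∈ uinvAminus) (h : Abar a = a) :
    a = 0 := by
  rw [AddMonoidAlgebra.mem_supported'] at ha
  ext n
  rcases lt_or_ge n 0 with hn | hn
  · have hcoeff : (Abar a).coeff n = a.coeff (-n) := invert_apply a n
    rw [← h, hcoeff]
    exact ha _ (by simp only [Set.mem_Iio]; omega)
  · exact ha n (not_lt.2 hn)

section Lattice

variable {I E : Type*} [AddCommGroup E] [Module A E]

lemma smul_mem_uinvLattice (t : I → E) {a : A} (ha : a ∈ uinvAminus) (i : I) :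
    a • t i ∈ uinvLattice t := by
  have hle : uinvAminus ≤
      (uinvLattice t).comap ((LinearMap.toSpanSingleton A E (t i)).restrictScalars ℤ) := by
    rw [uinvAminus, AddMonoidAlgebra.supported_eq_span_single, Submodule.span_le]
    rintro _ ⟨m, hm, rfl⟩
    refine Submodule.subset_span ⟨(-m - 1).toNat, i, ?_⟩
    have hm' : -((-m - 1).toNat : ℤ) - 1 = m := by simp only [Set.mem_Iio] at hm; omega
    rw [hm']
    rfl
  exact hle ha

lemma uinvLattice_comp_le {J : Type*} (t : I → E) (f : J → I) :
    uinvLattice (t ∘ f) ≤ uinvLattice t :=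
  Submodule.span_le.2 fun _ ⟨k, j, hx⟩ => Submodule.subset_span ⟨k, f j, hx⟩

lemma repr_mem_uinvAminus_of_mem_uinvLattice (t : Module.Basis I A E) {x : E}
    (hx : x ∈ uinvLattice ⇑t) (j : I) : t.repr x j ∈ uinvAminus := by
  classical
  refine (Submodule.span_le (p := uinvAminus.comap ((t.coord j).restrictScalars ℤ))).2 ?_ hx
  rintro _ ⟨k, i, rfl⟩
  simp only [SetLike.mem_coe, Submodule.mem_comap, LinearMap.restrictScalars_apply,
    Module.Basis.coord_apply, map_smul, Module.Basis.repr_self, Finsupp.single_apply,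
    smul_eq_mul]
  split_ifs
  · rw [mul_one]; exact T_mem_uinvAminus (by omega)
  · rw [mul_zero]; exact Submodule.zero_mem _

lemma mem_uinvLattice_of_repr (t : Module.Basis I A E) (s : Set I) {x : E}
    (hx : ∀ j, t.repr x j ∈ uinvAminus) (hsupp : ↑(t.repr x).support ⊆ s) :
    x ∈ uinvLattice (fun i : s => t i) := by
  rw [← t.linearCombination_repr x, Finsupp.linearCombination_apply, Finsupp.sum]
  exact Submodule.sum_mem _ fun j hj =>
    smul_mem_uinvLattice (fun i : s => t i) (hx j) ⟨j, hsupp hj⟩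

lemma IsICBasis.restrict {bar : E → E} {t c : I → E} (hc : IsICBasis bar t c) (s : Set I)
    (hcong : ∀ i : s, c i - t i ∈ uinvLattice (fun i : s => t i)) :
    IsICBasis bar (fun i : s => t i) (fun i : s => c i) where
  bar_invariant i := hc.bar_invariant i
  congruent := hcong
  unique d hbar hdcong := by
    classical
    let D : I → E := fun i => if h : i ∈ s then d ⟨i, h⟩ else c i
    have hD : D = c := by
      refine hc.unique D (fun i => ?_) (fun i => ?_)
      · by_cases h : i ∈ s <;> simp [D, h, hbar, hc.bar_invariant]
      · by_cases h : i ∈ s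
        · simpa [D, h] using uinvLattice_comp_le t Subtype.val (hdcong ⟨i, h⟩)
        · simpa [D, h] using hc.congruent i
    funext i
    simpa [D] using congrFun hD i

end Lattice

section Triangular

variable {I E : Type*} [PartialOrder I] [AddCommGroup E] [Module A E]
  (t : Module.Basis I A E) (bar : E →+ E)

lemma repr_bar_basis_of_not_lt
    (htriangular : ∀ j : I, bar (t j) - t j ∈ Submodule.span A (⇑t '' {i : I | i < j}))
    {j k : I} (h : ¬ j < k) : t.repr (bar (t k)) j = t.repr (t k) j := by
  have hzero : t.repr (bar (t k) - t k) j = 0 :=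
    Finsupp.notMem_support_iff.1 fun hj => h ((t.mem_span_image.1 (htriangular k)) hj)
  rwa [map_sub, Finsupp.sub_apply, sub_eq_zero] at hzero

lemma repr_bar_of_forall_not_lt
    (bar_semilinear : ∀ (a : A) (x : E), bar (a • x) = Abar a • bar x)
    (htriangular : ∀ j : I, bar (t j) - t j ∈ Submodule.span A (⇑t '' {i : I | i < j}))
    {x : E} {j : I} (h : ∀ k ∈ (t.repr x).support, ¬ j < k) :
    t.repr (bar x) j = Abar (t.repr x j) := by
  classical
  calc t.repr (bar x) j
      = ∑ k ∈ (t.repr x).support, Abar (t.repr x k) * t.repr (t k) j := by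
        conv_lhs => rw [← t.linearCombination_repr x, Finsupp.linearCombination_apply,
          Finsupp.sum]
        simp only [map_sum, bar_semilinear, map_smul, Finsupp.finsetSum_apply,
          Finsupp.smul_apply, smul_eq_mul]
        exact Finset.sum_congr rfl fun k hk => by
          rw [repr_bar_basis_of_not_lt t bar htriangular (h k hk)]
    _ = Abar (t.repr x j) := by
        simp only [Module.Basis.repr_self, Finsupp.single_apply, mul_ite, mul_one, mul_zero,
          Finset.sum_ite_eq', Finsupp.mem_support_iff, ite_not]
        split_ifs with hj <;> simp [hj]

lemma repr_eq_zero_of_bar_sub_mem_span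
    (bar_semilinear : ∀ (a : A) (x : E), bar (a • x) = Abar a • bar x)
    (htriangular : ∀ j : I, bar (t j) - t j ∈ Submodule.span A (⇑t '' {i : I | i < j}))
    {s : Set I} (hs : IsLowerSet s) {x : E} (hx : ∀ j, t.repr x j ∈ uinvAminus)
    (hbx : bar x - x ∈ Submodule.span A (⇑t '' s)) {j : I} (hj : j ∉ s) :
    t.repr x j = 0 := by
  by_contra hne
  let S : Set I := {j | j ∉ s ∧ t.repr x j ≠ 0}
  have hSfin : S.Finite := (t.repr x).support.finite_toSet.subset fun _ hj => Finsupp.mem_support_iff.2 hj.2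
  obtain ⟨m, hmS, hmax⟩ := hSfin.exists_maximalFor id S ⟨j, hj, hne⟩
  have hnot_lt : ∀ k ∈ (t.repr x).support, ¬ m < k := fun k hk hmk => by
    by_cases hks : k ∈ s
    · exact hmS.1 (hs hmk.le hks)
    · exact hmk.not_ge (hmax ⟨hks, Finsupp.mem_support_iff.1 hk⟩ hmk.le)
  have hfix : Abar (t.repr x m) = t.repr x m := by
    rw [← repr_bar_of_forall_not_lt t bar bar_semilinear htriangular hnot_lt, ← sub_eq_zero,
      ← Finsupp.sub_apply, ← map_sub]
    exact Finsupp.notMem_support_iff.1 fun hm => hmS.1 (t.mem_span_image.1 hbx hm)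
  exact hmS.2 (eq_zero_of_mem_uinvAminus_of_Abar_eq (hx m) hfix)

lemma IsICBasis.support_repr_sub_subset
    (bar_semilinear : ∀ (a : A) (x : E), bar (a • x) = Abar a • bar x)
    (htriangular : ∀ j : I, bar (t j) - t j ∈ Submodule.span A (⇑t '' {i : I | i < j}))
    {c : I → E} (hc : IsICBasis (⇑bar) (⇑t) c) {s : Set I} (hs : IsLowerSet s) {i : I}
    (hi : i ∈ s) : ↑(t.repr (c i - t i)).support ⊆ s := by
  have hbx : bar (c i - t i) - (c i - t i) ∈ Submodule.span A (⇑t '' s) := by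
    have hdiff : bar (c i - t i) - (c i - t i) = -(bar (t i) - t i) := by
      rw [map_sub, hc.bar_invariant i]; abel
    rw [hdiff]
    exact Submodule.neg_mem _
      (Submodule.span_mono (Set.image_mono fun k hk => hs (le_of_lt hk) hi) (htriangular i))
  intro j hj
  by_contra hjs
  exact Finsupp.mem_support_iff.1 hj <| repr_eq_zero_of_bar_sub_mem_span t bar bar_semilinear
    htriangular hs (repr_mem_uinvAminus_of_mem_uinvLattice t (hc.congruent i)) hbx hjs

end Triangular

theorem ic_basis_of_lower_order_ideal_general
    {I E : Type*} [PartialOrder I] [AddCommGroup E] [Module A E]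
    (t : Module.Basis I A E)
    (bar : E →+ E)
    (bar_semilinear : ∀ (a : A) (x : E), bar (a • x) = Abar a • bar x)
    (htriangular : ∀ j : I, bar (t j) - t j ∈ Submodule.span A (⇑t '' {i : I | i < j}))
    (c : I → E) (hc : IsICBasis (⇑bar) (⇑t) c)
    (I' : Set I) (hI' : ∀ ⦃i j : I⦄, i ∈ I' → j ≤ i → j ∈ I') :
    (∀ i ∈ I', c i ∈ Submodule.span A (⇑t '' I')) ∧
      IsICBasis (⇑bar) (fun i : I' => t i) (fun i : I' => c i) := by
  have hlower : IsLowerSet I' := fun _ _ hji hi => hI' hi hji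
  have hsupp : ∀ i ∈ I', ↑(t.repr (c i - t i)).support ⊆ I' := fun _ hi =>
    hc.support_repr_sub_subset t bar bar_semilinear htriangular hlower hi
  refine ⟨fun i hi => ?_, hc.restrict I' fun i => ?_⟩
  · simpa using Submodule.add_mem _ (t.mem_span_image.2 (hsupp i hi))
      (Submodule.subset_span ⟨i, hi, rfl⟩)
  · exact mem_uinvLattice_of_repr t I'
      (repr_mem_uinvAminus_of_mem_uinvLattice t (hc.congruent i)) (hsupp i i.2)

/-- Let `E` be a free `A`-module with basis `t : I → E` and a semilinear
involution `bar`, where `(I, <)` is a poset such that each lower set `{i | i < j}` is finite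
and `bar (t j) ≡ t j` modulo the `A`-span of `{t i : i < j}` (so Du's theorem provides the
IC basis `c` of `E`, taken here as a hypothesis).  If `I′` is a lower order ideal of `I` and
`E′` is the `A`-span of `{t i : i ∈ I′}`, then the `c i` for `i ∈ I′` lie in `E′` and the
restricted family is the IC basis of `E′` (with respect to the restricted standard basis and
the restricted involution); in particular it exists, and it is a subset of the IC basis of
`E`. -/
theorem ic_basis_of_lower_order_ideal
    {I E : Type*} [PartialOrder I] [AddCommGroup E] [Module A E]
    (t : Module.Basis I A E)
    (bar : E →+ E)
    (bar_semilinear : ∀ (a : A) (x : E), bar (a • x) = Abar a • bar x)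
    (bar_involutive : ∀ x : E, bar (bar x) = x)
    (hfin : ∀ j : I, {i : I | i < j}.Finite)
    (htriangular : ∀ j : I, bar (t j) - t j ∈ Submodule.span A (⇑t '' {i : I | i < j}))
    (c : I → E) (hc : IsICBasis (⇑bar) (⇑t) c)
    (I' : Set I) (hI' : ∀ ⦃i j : I⦄, i ∈ I' → j ≤ i → j ∈ I') :
    (∀ i ∈ I', c i ∈ Submodule.span A (⇑t '' I')) ∧
      IsICBasis (⇑bar) (fun i : I' => t i) (fun i : I' => c i) :=
  ic_basis_of_lower_order_ideal_general t bar bar_semilinear htriangular c hc I' hI'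

end
end

section
/- Let H be the Hecke algebra of a Coxeter system (W,S), let J₂ ⊆ J₁ ⊆ S, let E be a left H_{J₂}-module with an involution bar intertwining the bar-involution of H_{J₂}, and let Γ be a bar-invariant A-basis of E. Let Λ_{J₁} be the canonical (IC) basis of H_{J₁} ⊗_{H_{J₂}} E built from the standard basis {T_w ⊠ γ : w ∈ W_{J₁}^{J₂}, γ ∈ Γ}. Then for Ẽ = H ⊗_{H_{J₂}} E, the IC basis of Ẽ built from the standard basis {T_w ⊠ γ : w ∈ W^{J₂}, γ ∈ Γ} equals the IC basis of Ẽ = H ⊗_{H_{J₁}} (H_{J₁} ⊗_{H_{J₂}} E) built from the standard basis {T_w ⊠ δ : w ∈ W^{J₁}, δ ∈ Λ_{J₁}}. Moreover the multiplication map (v₁, v₂) ↦ v₁v₂ is a bijection W^{J₁} × W_{J₁}^{J₂} → W^{J₂} with ℓ(v₁v₂) = ℓ(v₁) + ℓ(v₂). -/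
/-
If `w` has minimal length in its coset `w W_J`, then `ℓ(wv) = ℓ(w) + ℓ(v)` for all `v ∈ W_J`:
otherwise the exchange condition, applied to a reduced word of `w` followed by a shortest `J`-word
for `v`, would shorten either `w` inside its coset or the `J`-word. The exchange condition comes
from the reflection cocycle: `s_i ↦ ((t, ε) ↦ (s_i t s_i, ε + [t = s_i]))` defines an action of `W`
on `W × ℤ/2`, so the parity of the number of occurrences of `t` in the right inversion sequence of
a word only depends on the product of the word.

Length additivity makes `(v₁, v₂) ↦ v₁v₂` a bijection `W^{J₁} × W_{J₁}^{J₂} → W^{J₂}` and gives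
`T_{v₁} ⊠ (T_{v₂} ⊠ γ) = T_{v₁v₂} ⊠ γ`. As `Λ_{J₁}` is congruent to its standard basis modulo `u⁻¹`,
the standard basis `{T_w ⊠ δ}` is congruent to `{T_w ⊠ γ}` modulo the `u⁻¹`-lattice of the latter;
hence the IC basis for the former satisfies the defining properties of the IC basis for the latter,
and uniqueness identifies the two.
-/

noncomputable section
open LaurentPolynomial

namespace CoxeterSystem

variable {B W : Type*} [Group W] {M : CoxeterMatrix B} (cs : CoxeterSystem M W)

local prefix:100 "s" => cs.simple
local prefix:100 "π" => cs.wordProd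
local prefix:100 "ℓ" => cs.length
local prefix:100 "ris" => cs.rightInvSeq
local notation "W_" J:max => Subgroup.closure (cs.simple '' J)

theorem simple_mul_mul_simple_eq_iff (i : B) (x y : W) : s i * x * s i = y ↔ x = s i * y * s i := by
  constructor <;> rintro rfl <;> simp [mul_assoc]

section ReflectionCocycle

variable [DecidableEq W]

def reflectionPerm (i : B) : Equiv.Perm (W × ZMod 2) :=
  Function.Involutive.toPerm (fun p => (s i * p.1 * s i, p.2 + if p.1 = s i then 1 else 0)) <| by
    rintro ⟨t, ε⟩
    have hfix : s i * t * s i = s i ↔ t = s i := by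
      rw [simple_mul_mul_simple_eq_iff, mul_assoc, simple_mul_simple_self, mul_one]
    refine Prod.ext (by simp [mul_assoc]) ?_
    simp only [hfix]
    rw [add_assoc, CharTwo.add_self_eq_zero, add_zero]

theorem reflectionPerm_apply (i : B) (t : W) (ε : ZMod 2) :
    cs.reflectionPerm i (t, ε) = (s i * t * s i, ε + if t = s i then 1 else 0) := rfl

theorem reflectionPerm_mul_pow_apply (a b : B) (k : ℕ) (t : W) (ε : ZMod 2) :
    ((cs.reflectionPerm a * cs.reflectionPerm b) ^ k) (t, ε) =
      ((s a * s b) ^ k * t * (s a * s b)⁻¹ ^ k,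
        ε + ∑ j ∈ Finset.range (2 * k), if t = (s a * s b)⁻¹ ^ j * s b then 1 else 0) := by
  set g := s a * s b
  have hg : s b * s a * s b = g⁻¹ * s b := by simp [g]
  have hconj (n : ℕ) : s b * g ^ n = g⁻¹ ^ n * s b :=
    SemiconjBy.pow_right (by simp [SemiconjBy, g, mul_assoc]) n
  have hconj_eq (n : ℕ) (x : W) : g ^ n * t * g⁻¹ ^ n = x ↔ t = g⁻¹ ^ n * x * g ^ n := by
    constructor <;> rintro rfl <;> group
  induction k with
  | zero => simp
  | succ k ih =>
    have hb : g ^ k * t * g⁻¹ ^ k = s b ↔ t = g⁻¹ ^ (2 * k) * s b := by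
      rw [hconj_eq, mul_assoc, hconj, ← mul_assoc, ← pow_add, two_mul]
    have ha : s b * (g ^ k * t * g⁻¹ ^ k) * s b = s a ↔ t = g⁻¹ ^ (2 * k + 1) * s b := by
      rw [simple_mul_mul_simple_eq_iff, hconj_eq, hg, mul_assoc, mul_assoc, hconj]
      group
    rw [pow_succ', Equiv.Perm.mul_apply, ih, Equiv.Perm.mul_apply, reflectionPerm_apply,
      reflectionPerm_apply, show 2 * (k + 1) = 2 * k + 1 + 1 by ring,
      Finset.sum_range_succ, Finset.sum_range_succ]
    dsimp only
    simp only [hb, ha]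
    refine Prod.ext ?_ (by ring)
    calc s a * (s b * (g ^ k * t * g⁻¹ ^ k) * s b) * s a = g * (g ^ k * t * g⁻¹ ^ k) * g⁻¹ := by
          simp [g, mul_assoc]
      _ = g ^ (k + 1) * t * g⁻¹ ^ (k + 1) := by group

theorem isLiftable_reflectionPerm : M.IsLiftable cs.reflectionPerm := by
  intro a b
  ext ⟨t, ε⟩ : 1
  have hm : (s a * s b) ^ M a b = 1 := cs.simple_mul_simple_pow a b
  rw [reflectionPerm_mul_pow_apply, two_mul, Finset.sum_range_add]
  simp [hm, pow_add, CharTwo.add_self_eq_zero]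

def reflectionRep : W →* Equiv.Perm (W × ZMod 2) :=
  cs.lift ⟨cs.reflectionPerm, cs.isLiftable_reflectionPerm⟩

theorem reflectionRep_simple (i : B) : cs.reflectionRep (s i) = cs.reflectionPerm i :=
  cs.lift_apply_simple _ i

theorem reflectionRep_wordProd_apply (ω : List B) (t : W) (ε : ZMod 2) :
    cs.reflectionRep (π ω) (t, ε) = (π ω * t * (π ω)⁻¹, ε + (ris ω).count t) := by
  induction ω generalizing ε with
  | nil => simp
  | cons i ω ih =>
    rw [wordProd_cons, map_mul, Equiv.Perm.mul_apply, ih, reflectionRep_simple,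
      reflectionPerm_apply]
    have hcond : π ω * t * (π ω)⁻¹ = s i ↔ (π ω)⁻¹ * s i * π ω = t := by
      constructor <;> intro h <;> rw [← h] <;> group
    refine Prod.ext (by simp [mul_assoc]) ?_
    simp only [hcond, show ris (i :: ω) = (π ω)⁻¹ * s i * π ω :: ris ω from rfl, List.count_cons,
      beq_iff_eq]
    push_cast
    ring

theorem natCast_count_rightInvSeq_eq_of_wordProd_eq {ω ω' : List B} (h : π ω = π ω') (t : W) :
    ((ris ω).count t : ZMod 2) = (ris ω').count t := by
  simpa [reflectionRep_wordProd_apply] using congrArg (fun w => (cs.reflectionRep w (t, 0)).2) h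

end ReflectionCocycle

theorem exists_eraseIdx_of_length_mul_simple_lt {ω : List B} {i : B}
    (h : ℓ (π ω * s i) < ℓ (π ω)) : ∃ j < ω.length, π ω * s i = π (ω.eraseIdx j) := by
  classical
  obtain ⟨τ, hτ, hτω⟩ := cs.exists_isReduced (π ω * s i)
  have hnot : s i ∉ (ris τ).map (MulAut.conj (s i)) := by
    intro hmem
    obtain ⟨r, hr, hconj⟩ := List.mem_map.mp hmem
    rw [MulAut.conj_apply, inv_simple, simple_mul_mul_simple_eq_iff, simple_mul_simple_self,
      one_mul] at hconj
    have := (cs.isRightInversion_of_mem_rightInvSeq hτ (hconj ▸ hr)).2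
    rw [← hτω, simple_mul_simple_cancel_right] at this
    omega
  have hodd : ((ris ω).count (s i) : ZMod 2) = 1 := by
    have hω : π ω = π (τ.concat i) := by rw [wordProd_concat, ← hτω, simple_mul_simple_cancel_right]
    rw [cs.natCast_count_rightInvSeq_eq_of_wordProd_eq hω, rightInvSeq_concat,
      List.concat_eq_append, List.count_append, List.count_eq_zero.mpr hnot]
    simp
  have hmem : s i ∈ ris ω := List.count_pos_iff.mp <| Nat.pos_of_ne_zero fun h0 => by
    simp [h0] at hodd
  obtain ⟨j, hj, hget⟩ := List.mem_iff_getElem.mp hmem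
  refine ⟨j, by simpa using hj, ?_⟩
  rw [← cs.wordProd_mul_getD_rightInvSeq, List.getD_eq_getElem _ _ hj, hget]
theorem exchange_append {τ ω : List B} {i : B} (h : ℓ (π τ * π ω * s i) < ℓ (π τ * π ω)) :
    (∃ j < τ.length, π τ * π ω * s i = π (τ.eraseIdx j) * π ω) ∨
      ∃ j < ω.length, π ω * s i = π (ω.eraseIdx j) := by
  rw [← wordProd_append] at h
  obtain ⟨j, hj, he⟩ := cs.exists_eraseIdx_of_length_mul_simple_lt h
  rw [List.length_append] at hj
  by_cases hjτ : j < τ.length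
  · rw [List.eraseIdx_append_of_lt_length hjτ, wordProd_append, wordProd_append] at he
    exact Or.inl ⟨j, hjτ, he⟩
  · rw [List.eraseIdx_append_of_length_le (not_lt.mp hjτ), wordProd_append, wordProd_append,
      mul_assoc] at he
    exact Or.inr ⟨j - τ.length, by omega, mul_left_cancel he⟩

variable {J : Set B}

theorem wordProd_mem_closure {ω : List B} (hω : ∀ i ∈ ω, i ∈ J) :
    π ω ∈ W_ J :=
  Subgroup.list_prod_mem _ fun _ hx => by
    obtain ⟨i, hi, rfl⟩ := List.mem_map.mp hx
    exact Subgroup.subset_closure ⟨i, hω i hi, rfl⟩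

theorem exists_wordProd_eq_of_mem_closure {w : W} (hw : w ∈ W_ J) :
    ∃ ω : List B, (∀ i ∈ ω, i ∈ J) ∧ π ω = w := by
  induction hw using Subgroup.closure_induction with
  | mem _ hx =>
    obtain ⟨i, hi, rfl⟩ := hx
    exact ⟨[i], by simpa using hi, by simp [wordProd]⟩
  | one => exact ⟨[], by simp, cs.wordProd_nil⟩
  | mul _ _ _ _ ihx ihy =>
    obtain ⟨ω, hω, rfl⟩ := ihx
    obtain ⟨ω', hω', rfl⟩ := ihy
    exact ⟨ω ++ ω', by simpa using fun i hi => hi.elim (hω i) (hω' i), wordProd_append _ _ _⟩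
  | inv _ _ ih =>
    obtain ⟨ω, hω, rfl⟩ := ih
    exact ⟨ω.reverse, by simpa using hω, wordProd_reverse _ _⟩

def IsMinCosetRep (P : Subgroup W) (w : W) : Prop := ∀ v ∈ P, ℓ w ≤ ℓ (w * v)

theorem exists_isMinCosetRep_mul (P : Subgroup W) (w : W) :
    ∃ y ∈ P, cs.IsMinCosetRep P (w * y) := by
  obtain ⟨y, hy, hmin⟩ := (measure fun y => ℓ (w * y)).wf.has_min (P : Set W) ⟨1, P.one_mem⟩
  refine ⟨y, hy, fun v hv => ?_⟩
  rw [mul_assoc]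
  exact not_lt.mp (hmin (y * v) (P.mul_mem hy hv))

theorem length_mul_wordProd_of_isMinCosetRep {w : W} (hw : cs.IsMinCosetRep (W_ J) w)
    {ω : List B} (hωJ : ∀ i ∈ ω, i ∈ J)
    (hmin : ∀ σ : List B, (∀ i ∈ σ, i ∈ J) → π σ = π ω → ω.length ≤ σ.length) :
    ℓ (w * π ω) = ℓ w + ω.length := by
  obtain ⟨τ, hτ, rfl⟩ := cs.exists_isReduced w
  induction ω using List.reverseRecOn with
  | nil => simp
  | append_singleton ω i ih =>
    have hωJ' : ∀ j ∈ ω, j ∈ J := fun j hj => hωJ j (List.mem_append_left _ hj)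
    have hi : i ∈ J := hωJ i (by simp)
    have hprod : π (ω ++ [i]) = π ω * s i := by simp [wordProd_append]
    have hmin' : ∀ σ : List B, (∀ i ∈ σ, i ∈ J) → π σ = π ω → ω.length ≤ σ.length := by
      intro σ hσ hσω
      simpa using hmin (σ ++ [i]) (by simpa [or_imp, forall_and, hi] using hσ)
        (by rw [wordProd_append, hσω, hprod]; simp)
    rw [hprod, ← mul_assoc, List.length_append, List.length_singleton]
    rcases cs.length_mul_simple (π τ * π ω) i with hup | hdown
    · rw [hup, ih hωJ' hmin', add_assoc]
    exfalso
    rcases cs.exchange_append (τ := τ) (ω := ω) (i := i) (by omega) with ⟨j, hj, he⟩ | ⟨j, hj, he⟩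
    · have hωmem := cs.wordProd_mem_closure hωJ'
      have hmem : π ω * s i * (π ω)⁻¹ ∈ W_ J :=
        mul_mem (mul_mem hωmem (Subgroup.subset_closure ⟨i, hi, rfl⟩)) (inv_mem hωmem)
      have hshort : π τ * (π ω * s i * (π ω)⁻¹) = π (τ.eraseIdx j) := by
        rw [← mul_assoc, ← mul_assoc, he]; group
      have := hw _ hmem
      rw [hshort, hτ.eq] at this
      have := cs.length_wordProd_le (τ.eraseIdx j)
      have := List.length_eraseIdx_add_one hj
      omega
    · have := hmin (ω.eraseIdx j) (fun k hk => hωJ' k (List.mem_of_mem_eraseIdx hk))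
        (by rw [hprod, he])
      rw [List.length_append, List.length_singleton] at this
      have := List.length_eraseIdx_add_one hj
      omega

theorem exists_minimal_word_of_mem_closure {v : W} (hv : v ∈ W_ J) :
    ∃ ω : List B, (∀ i ∈ ω, i ∈ J) ∧ π ω = v ∧
      ∀ σ : List B, (∀ i ∈ σ, i ∈ J) → π σ = π ω → ω.length ≤ σ.length := by
  obtain ⟨ω, ⟨hωJ, rfl⟩, hmin⟩ := (measure List.length).wf.has_min
    {ω : List B | (∀ i ∈ ω, i ∈ J) ∧ π ω = v} (cs.exists_wordProd_eq_of_mem_closure hv)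
  exact ⟨ω, hωJ, rfl, fun σ hσ hσω => not_lt.mp (hmin σ ⟨hσ, hσω⟩)⟩

theorem length_mul_of_isMinCosetRep {w v : W} (hw : cs.IsMinCosetRep (W_ J) w) (hv : v ∈ W_ J) :
    ℓ (w * v) = ℓ w + ℓ v := by
  obtain ⟨ω, hωJ, rfl, hmin⟩ := cs.exists_minimal_word_of_mem_closure hv
  have hone : cs.IsMinCosetRep (W_ J) 1 := by simp [IsMinCosetRep]
  have hlen := cs.length_mul_wordProd_of_isMinCosetRep hone hωJ hmin
  rw [one_mul, length_one, zero_add] at hlen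
  rw [cs.length_mul_wordProd_of_isMinCosetRep hw hωJ hmin, hlen]

section Parabolic

variable {P : Subgroup W}

theorem IsMinCosetRep.eq_of_inv_mul_mem {a a' : W} (ha : cs.IsMinCosetRep (W_ J) a)
    (ha' : cs.IsMinCosetRep (W_ J) a') (h : a⁻¹ * a' ∈ W_ J) : a = a' := by
  have h₁ := cs.length_mul_of_isMinCosetRep ha h
  have h₂ := cs.length_mul_of_isMinCosetRep ha' (inv_mem h)
  rw [mul_inv_cancel_left] at h₁
  rw [length_inv, mul_inv_rev, inv_inv, mul_inv_cancel_left] at h₂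
  have : a⁻¹ * a' = 1 := cs.length_eq_zero_iff.mp (by omega)
  exact inv_mul_eq_one.mp this

theorem IsMinCosetRep.mul (hP : P ≤ W_ J) {v₁ v₂ : W} (h₁ : cs.IsMinCosetRep (W_ J) v₁)
    (h₂J : v₂ ∈ W_ J) (h₂ : cs.IsMinCosetRep P v₂) : cs.IsMinCosetRep P (v₁ * v₂) := by
  intro v hv
  rw [mul_assoc, cs.length_mul_of_isMinCosetRep h₁ h₂J,
    cs.length_mul_of_isMinCosetRep h₁ (mul_mem h₂J (hP hv))]
  exact Nat.add_le_add_left (h₂ v hv) _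

theorem exists_mul_eq_of_isMinCosetRep (hP : P ≤ W_ J) {w : W} (hw : cs.IsMinCosetRep P w) :
    ∃ v₁ v₂, cs.IsMinCosetRep (W_ J) v₁ ∧ (v₂ ∈ W_ J ∧ cs.IsMinCosetRep P v₂) ∧ v₁ * v₂ = w := by
  obtain ⟨y, hy, hmin⟩ := cs.exists_isMinCosetRep_mul (W_ J) w
  have hy' : y⁻¹ ∈ W_ J := inv_mem hy
  refine ⟨w * y, y⁻¹, hmin, ⟨hy', fun v hv => ?_⟩, mul_inv_cancel_right w y⟩
  have h₁ := cs.length_mul_of_isMinCosetRep hmin hy'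
  have h₂ := cs.length_mul_of_isMinCosetRep hmin (mul_mem hy' (hP hv))
  rw [mul_inv_cancel_right] at h₁
  rw [← mul_assoc, mul_inv_cancel_right] at h₂
  have := hw v hv
  omega

def minCosetRepMulEquiv (hP : P ≤ W_ J) :
    {w // cs.IsMinCosetRep (W_ J) w} × {w // w ∈ W_ J ∧ cs.IsMinCosetRep P w} ≃
      {w // cs.IsMinCosetRep P w} :=
  Equiv.ofBijective (fun p => ⟨p.1 * p.2, p.1.2.mul cs hP p.2.2.1 p.2.2.2⟩) <| by
    refine ⟨fun ⟨⟨a, ha⟩, ⟨b, hb⟩⟩ ⟨⟨a', ha'⟩, ⟨b', hb'⟩⟩ he => ?_, fun ⟨w, hw⟩ => ?_⟩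
    · have he : a * b = a' * b' := congrArg Subtype.val he
      have hmem : a⁻¹ * a' ∈ W_ J := by
        rw [show a⁻¹ * a' = b * b'⁻¹ by rw [inv_mul_eq_iff_eq_mul, ← mul_assoc, he,
          mul_inv_cancel_right]]
        exact mul_mem hb.1 (inv_mem hb'.1)
      obtain rfl := ha.eq_of_inv_mul_mem cs ha' hmem
      obtain rfl := mul_left_cancel he
      rfl
    · obtain ⟨v₁, v₂, h₁, h₂, rfl⟩ := cs.exists_mul_eq_of_isMinCosetRep hP hw
      exact ⟨(⟨v₁, h₁⟩, ⟨v₂, h₂⟩), rfl⟩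

end Parabolic

end CoxeterSystem

section UinvLattice

variable {I I' E F : Type*} [AddCommGroup E] [Module A E] [AddCommGroup F] [Module A F]

theorem map_mem_uinvLattice (φ : E →ₗ[A] F) {t : I → E} {t' : I' → F} (f : I → I')
    (hφ : ∀ i, φ (t i) = t' (f i)) {x : E} (hx : x ∈ uinvLattice t) : φ x ∈ uinvLattice t' := by
  have hle : (uinvLattice t).map φ.toAddMonoidHom.toIntLinearMap ≤ uinvLattice t' := by
    refine (Submodule.map_span_le _ _ _).mpr ?_
    rintro _ ⟨k, i, rfl⟩
    exact Submodule.subset_span ⟨k, f i, by simp [hφ]⟩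
  exact hle ⟨x, hx, rfl⟩

theorem T_smul_mem_uinvLattice {t : I → E} (k : ℕ) {x : E} (hx : x ∈ uinvLattice t) :
    (T (-(k : ℤ) - 1) : A) • x ∈ uinvLattice t := by
  have hle : (uinvLattice t).map (DistribSMul.toLinearMap ℤ E (T (-(k : ℤ) - 1) : A)) ≤
      uinvLattice t := by
    refine (Submodule.map_span_le _ _ _).mpr ?_
    rintro _ ⟨m, i, rfl⟩
    refine Submodule.subset_span ⟨k + m + 1, i, ?_⟩
    rw [DistribSMul.toLinearMap_apply, smul_smul, ← T_add]
    congr 2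
    push_cast
    ring
  exact hle ⟨x, hx, rfl⟩

theorem uinvLattice_le_of_sub_mem {t : I → E} {t' : I' → E} (f : I' → I)
    (h : ∀ j, t' j - t (f j) ∈ uinvLattice t) : uinvLattice t' ≤ uinvLattice t := by
  refine Submodule.span_le.mpr ?_
  rintro _ ⟨k, j, rfl⟩
  rw [SetLike.mem_coe, ← add_sub_cancel (t (f j)) (t' j), smul_add]
  exact add_mem (Submodule.subset_span ⟨k, f j, rfl⟩) (T_smul_mem_uinvLattice k (h j))

theorem IsICBasis.map_sub_mem_uinvLattice {bar : E → E} {t c : I → E} {t' : I' → F}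
    (hc : IsICBasis bar t c) (φ : E →ₗ[A] F) (f : I → I') (hφ : ∀ i, φ (t i) = t' (f i))
    (i : I) : φ (c i) - t' (f i) ∈ uinvLattice t' := by
  rw [← hφ, ← map_sub]
  exact map_mem_uinvLattice φ f hφ (hc.congruent i)

theorem IsICBasis.eq_comp_of_sub_mem {bar : E → E} {t c : I → E} {t' c' : I' → E}
    (hc : IsICBasis bar t c) (hc' : IsICBasis bar t' c') (e : I' ≃ I)
    (h : ∀ j, t' j - t (e j) ∈ uinvLattice t) : c' = c ∘ e := by
  have hd : c' ∘ e.symm = c := by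
    refine hc.unique _ (fun i => hc'.bar_invariant _) fun i => ?_
    have hsplit : c' (e.symm i) - t i =
        (c' (e.symm i) - t' (e.symm i)) + (t' (e.symm i) - t (e (e.symm i))) := by
      rw [e.apply_symm_apply]; abel
    rw [Function.comp_apply, hsplit]
    exact add_mem (uinvLattice_le_of_sub_mem e h (hc'.congruent _)) (h _)
  rw [← hd, Function.comp_assoc, e.symm_comp_self, Function.comp_id]

end UinvLattice

theorem nested_parabolic_IC_bases_general
    {B W : Type*} [Group W] (M : CoxeterMatrix B) (cs : CoxeterSystem M W)
    -- nested subsets of simple reflections `J₂ ⊆ J₁ ⊆ S`, with parabolic subgroups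
    (J₁ J₂ : Set B) (hJ : J₂ ⊆ J₁)
    (WJ1 WJ2 : Subgroup W)
    (hWJ1 : WJ1 = Subgroup.closure (cs.simple '' J₁))
    (hWJ2 : WJ2 = Subgroup.closure (cs.simple '' J₂))
    -- the Hecke algebra of `W`
    (H : Type*) [Ring H] [Algebra A H] (Tb : Module.Basis W A H)
    (hTmul : ∀ v w : W, cs.length (v * w) = cs.length v + cs.length w →
      Tb (v * w) = Tb v * Tb w)
    -- the parabolic Hecke subalgebra `H_{J₁}` (the `A`-span of `{T_w : w ∈ W_{J₁}}`)
    (HJ1 : Subalgebra A H)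
    (hTmem : ∀ w ∈ WJ1, Tb w ∈ HJ1)
    -- `E`, a left `H_{J₂}`-module with bar-invariant basis `Γ` and compatible involution
    {Γ : Type*} (E : Type*) [AddCommGroup E] [Module A E] (Γb : Module.Basis Γ A E)
    -- `M1 = H_{J₁} ⊗_{H_{J₂}} E`: an `H_{J₁}`-module with balanced unit and involution
    (M1 : Type*) [AddCommGroup M1] [Module A M1] [Module HJ1 M1]
    (unit1 : E →ₗ[A] M1)
    (barM1 : M1 →+ M1)
    -- `Λ_{J₁}`: the IC basis of `M1` built from `{T_w ⊠ γ : w ∈ W_{J₁}^{J₂}, γ ∈ Γ}`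
    (c1 : {w : W // w ∈ WJ1 ∧ ∀ v ∈ WJ2, cs.length w ≤ cs.length (w * v)} × Γ → M1)
    (hc1 : IsICBasis (⇑barM1)
      (fun p : {w : W // w ∈ WJ1 ∧ ∀ v ∈ WJ2, cs.length w ≤ cs.length (w * v)} × Γ =>
        (⟨Tb p.1.1, hTmem _ p.1.2.1⟩ : HJ1) • unit1 (Γb p.2)) c1)
    -- `Ẽ = H ⊗_{H_{J₂}} E = H ⊗_{H_{J₁}} M1`: an `H`-module with compatible units
    (tE : Type*) [AddCommGroup tE] [Module A tE] [Module H tE] [IsScalarTower A H tE]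
    (unit : E →ₗ[A] tE)
    (η : M1 →ₗ[A] tE)
    (hη_unit : ∀ e : E, η (unit1 e) = unit e)
    (hη_equiv : ∀ (r : HJ1) (x : M1), η (r • x) = (r : H) • η x)
    (barT : tE →+ tE) :
    -- (A) `(v₁,v₂) ↦ v₁v₂` is a length-additive bijection `W^{J₁} × W_{J₁}^{J₂} → W^{J₂}`
    ((∀ (v₁ : W) (_ : ∀ v ∈ WJ1, cs.length v₁ ≤ cs.length (v₁ * v))
        (v₂ : W) (_ : v₂ ∈ WJ1 ∧ ∀ v ∈ WJ2, cs.length v₂ ≤ cs.length (v₂ * v)),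
        (∀ v ∈ WJ2, cs.length (v₁ * v₂) ≤ cs.length (v₁ * v₂ * v)) ∧
          cs.length (v₁ * v₂) = cs.length v₁ + cs.length v₂) ∧
      (∀ (w : W) (_ : ∀ v ∈ WJ2, cs.length w ≤ cs.length (w * v)),
        ∃! p : {v : W // ∀ x ∈ WJ1, cs.length v ≤ cs.length (v * x)} ×
            {v : W // v ∈ WJ1 ∧ ∀ x ∈ WJ2, cs.length v ≤ cs.length (v * x)},
          p.1.1 * p.2.1 = w)) ∧
    -- (B) the two IC bases of `Ẽ` coincide: the IC basis built from
    -- `{T_w ⊠ γ : w ∈ W^{J₂}}` and the one built from `{T_w ⊠ δ : w ∈ W^{J₁}, δ ∈ Λ_{J₁}}`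
    -- have the same elements, matched along `(w, (v, γ)) ↦ (wv, γ)`
    (∀ (c : {w : W // ∀ v ∈ WJ2, cs.length w ≤ cs.length (w * v)} × Γ → tE),
      IsICBasis (⇑barT)
        (fun p : {w : W // ∀ v ∈ WJ2, cs.length w ≤ cs.length (w * v)} × Γ =>
          Tb p.1.1 • unit (Γb p.2)) c →
      ∀ (c2 : {w : W // ∀ v ∈ WJ1, cs.length w ≤ cs.length (w * v)} ×
          ({w : W // w ∈ WJ1 ∧ ∀ v ∈ WJ2, cs.length w ≤ cs.length (w * v)} × Γ) → tE),
        IsICBasis (⇑barT)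
          (fun q : {w : W // ∀ v ∈ WJ1, cs.length w ≤ cs.length (w * v)} ×
              ({w : W // w ∈ WJ1 ∧ ∀ v ∈ WJ2, cs.length w ≤ cs.length (w * v)} × Γ) =>
            Tb q.1.1 • η (c1 (q.2.1, q.2.2))) c2 →
        Set.range c2 = Set.range c ∧
          ∀ (q : {w : W // ∀ v ∈ WJ1, cs.length w ≤ cs.length (w * v)} ×
              ({w : W // w ∈ WJ1 ∧ ∀ v ∈ WJ2, cs.length w ≤ cs.length (w * v)} × Γ))
            (h : ∀ v ∈ WJ2, cs.length (q.1.1 * q.2.1.1) ≤ cs.length (q.1.1 * q.2.1.1 * v)),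
            c2 q = c (⟨q.1.1 * q.2.1.1, h⟩, q.2.2)) := by
  subst hWJ1 hWJ2
  have hP : Subgroup.closure (cs.simple '' J₂) ≤ Subgroup.closure (cs.simple '' J₁) :=
    Subgroup.closure_mono (Set.image_mono hJ)
  let μ := cs.minCosetRepMulEquiv hP
  refine ⟨⟨fun v₁ h₁ v₂ h₂ => ⟨CoxeterSystem.IsMinCosetRep.mul cs hP h₁ h₂.1 h₂.2,
    cs.length_mul_of_isMinCosetRep h₁ h₂.1⟩, fun w hw => ?_⟩, fun c hc c2 hc2 => ?_⟩
  · obtain ⟨p, hp, huniq⟩ := μ.bijective.existsUnique ⟨w, hw⟩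
    exact ⟨p, congrArg Subtype.val hp, fun q hq => huniq q (Subtype.ext hq)⟩
  let e := (Equiv.prodAssoc _ _ Γ).symm.trans (μ.prodCongr (Equiv.refl Γ))
  have hstd : ∀ q, Tb q.1.1 • η (c1 q.2) - Tb (e q).1.1 • unit (Γb (e q).2) ∈
      uinvLattice (fun p : {w : W // ∀ v ∈ Subgroup.closure (cs.simple '' J₂),
        cs.length w ≤ cs.length (w * v)} × Γ => Tb p.1.1 • unit (Γb p.2)) := by
    intro q
    refine hc1.map_sub_mem_uinvLattice ((DistribSMul.toLinearMap A tE (Tb q.1.1)).comp η)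
      (fun p => e (q.1, p)) (fun p => ?_) q.2
    rw [LinearMap.comp_apply, DistribSMul.toLinearMap_apply, hη_equiv, hη_unit, smul_smul,
      ← hTmul _ _ (cs.length_mul_of_isMinCosetRep q.1.2 p.1.2.1)]
    rfl
  have hc2c : c2 = c ∘ e := hc.eq_comp_of_sub_mem hc2 e hstd
  exact ⟨by rw [hc2c]; exact e.surjective.range_comp c, fun q _ => by rw [hc2c]; rfl⟩

theorem nested_parabolic_IC_bases
    {B W : Type*} [Group W] (M : CoxeterMatrix B) (cs : CoxeterSystem M W)
    -- nested subsets of simple reflections `J₂ ⊆ J₁ ⊆ S`, with parabolic subgroups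
    (J₁ J₂ : Set B) (hJ : J₂ ⊆ J₁)
    (WJ1 WJ2 : Subgroup W)
    (hWJ1 : WJ1 = Subgroup.closure (cs.simple '' J₁))
    (hWJ2 : WJ2 = Subgroup.closure (cs.simple '' J₂))
    -- the Hecke algebra of `W`
    (H : Type*) [Ring H] [Algebra A H] (Tb : Module.Basis W A H)
    (hT1 : Tb 1 = 1)
    (hTmul : ∀ v w : W, cs.length (v * w) = cs.length v + cs.length w →
      Tb (v * w) = Tb v * Tb w)
    (hTquad : ∀ i : B, Tb (cs.simple i) * Tb (cs.simple i) =
      (T 1 - T (-1) : A) • Tb (cs.simple i) + 1)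
    (barH : H →+* H)
    (hbarH_smul : ∀ (a : A) (h : H), barH (a • h) = Abar a • barH h)
    (hbarH_T : ∀ w : W, barH (Tb w) * Tb w⁻¹ = 1 ∧ Tb w⁻¹ * barH (Tb w) = 1)
    -- the parabolic Hecke subalgebra `H_{J₁}` (the `A`-span of `{T_w : w ∈ W_{J₁}}`)
    (HJ1 : Subalgebra A H)
    (hTmem : ∀ w ∈ WJ1, Tb w ∈ HJ1)
    (hHJ1span : ∀ h : H, h ∈ HJ1 → h ∈ Submodule.span A (⇑Tb '' (WJ1 : Set W)))
    (hbarHJ1 : ∀ r : HJ1, barH (r : H) ∈ HJ1)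
    -- `E`, a left `H_{J₂}`-module with bar-invariant basis `Γ` and compatible involution
    {Γ : Type*} (E : Type*) [AddCommGroup E] [Module A E] (Γb : Module.Basis Γ A E)
    (barE : E →+ E) (hbarE_smul : ∀ (a : A) (e : E), barE (a • e) = Abar a • barE e)
    (hbarE_fix : ∀ γ : Γ, barE (Γb γ) = Γb γ)
    -- `M1 = H_{J₁} ⊗_{H_{J₂}} E`: an `H_{J₁}`-module with balanced unit and involution
    (M1 : Type*) [AddCommGroup M1] [Module A M1] [Module HJ1 M1] [IsScalarTower A HJ1 M1]
    (unit1 : E →ₗ[A] M1)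
    (barM1 : M1 →+ M1)
    (hbarM1_smul : ∀ (a : A) (x : M1), barM1 (a • x) = Abar a • barM1 x)
    (hbarM1_box : ∀ (r : HJ1) (e : E),
      barM1 (r • unit1 e) = (⟨barH (r : H), hbarHJ1 r⟩ : HJ1) • unit1 (barE e))
    -- `Λ_{J₁}`: the IC basis of `M1` built from `{T_w ⊠ γ : w ∈ W_{J₁}^{J₂}, γ ∈ Γ}`
    (c1 : {w : W // w ∈ WJ1 ∧ ∀ v ∈ WJ2, cs.length w ≤ cs.length (w * v)} × Γ → M1)
    (hc1 : IsICBasis (⇑barM1)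
      (fun p : {w : W // w ∈ WJ1 ∧ ∀ v ∈ WJ2, cs.length w ≤ cs.length (w * v)} × Γ =>
        (⟨Tb p.1.1, hTmem _ p.1.2.1⟩ : HJ1) • unit1 (Γb p.2)) c1)
    -- `Ẽ = H ⊗_{H_{J₂}} E = H ⊗_{H_{J₁}} M1`: an `H`-module with compatible units
    (tE : Type*) [AddCommGroup tE] [Module A tE] [Module H tE] [IsScalarTower A H tE]
    (unit : E →ₗ[A] tE)
    (η : M1 →ₗ[A] tE)
    (hη_unit : ∀ e : E, η (unit1 e) = unit e)
    (hη_equiv : ∀ (r : HJ1) (x : M1), η (r • x) = (r : H) • η x)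
    (barT : tE →+ tE)
    (hbarT_smul : ∀ (a : A) (x : tE), barT (a • x) = Abar a • barT x)
    (hbarT_box : ∀ (h : H) (e : E), barT (h • unit e) = barH h • unit (barE e)) :
    -- (A) `(v₁,v₂) ↦ v₁v₂` is a length-additive bijection `W^{J₁} × W_{J₁}^{J₂} → W^{J₂}`
    ((∀ (v₁ : W) (_ : ∀ v ∈ WJ1, cs.length v₁ ≤ cs.length (v₁ * v))
        (v₂ : W) (_ : v₂ ∈ WJ1 ∧ ∀ v ∈ WJ2, cs.length v₂ ≤ cs.length (v₂ * v)),
        (∀ v ∈ WJ2, cs.length (v₁ * v₂) ≤ cs.length (v₁ * v₂ * v)) ∧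
          cs.length (v₁ * v₂) = cs.length v₁ + cs.length v₂) ∧
      (∀ (w : W) (_ : ∀ v ∈ WJ2, cs.length w ≤ cs.length (w * v)),
        ∃! p : {v : W // ∀ x ∈ WJ1, cs.length v ≤ cs.length (v * x)} ×
            {v : W // v ∈ WJ1 ∧ ∀ x ∈ WJ2, cs.length v ≤ cs.length (v * x)},
          p.1.1 * p.2.1 = w)) ∧
    -- (B) the two IC bases of `Ẽ` coincide: the IC basis built from
    -- `{T_w ⊠ γ : w ∈ W^{J₂}}` and the one built from `{T_w ⊠ δ : w ∈ W^{J₁}, δ ∈ Λ_{J₁}}`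
    -- have the same elements, matched along `(w, (v, γ)) ↦ (wv, γ)`
    (∀ (c : {w : W // ∀ v ∈ WJ2, cs.length w ≤ cs.length (w * v)} × Γ → tE),
      IsICBasis (⇑barT)
        (fun p : {w : W // ∀ v ∈ WJ2, cs.length w ≤ cs.length (w * v)} × Γ =>
          Tb p.1.1 • unit (Γb p.2)) c →
      ∀ (c2 : {w : W // ∀ v ∈ WJ1, cs.length w ≤ cs.length (w * v)} ×
          ({w : W // w ∈ WJ1 ∧ ∀ v ∈ WJ2, cs.length w ≤ cs.length (w * v)} × Γ) → tE),
        IsICBasis (⇑barT)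
          (fun q : {w : W // ∀ v ∈ WJ1, cs.length w ≤ cs.length (w * v)} ×
              ({w : W // w ∈ WJ1 ∧ ∀ v ∈ WJ2, cs.length w ≤ cs.length (w * v)} × Γ) =>
            Tb q.1.1 • η (c1 (q.2.1, q.2.2))) c2 →
        Set.range c2 = Set.range c ∧
          ∀ (q : {w : W // ∀ v ∈ WJ1, cs.length w ≤ cs.length (w * v)} ×
              ({w : W // w ∈ WJ1 ∧ ∀ v ∈ WJ2, cs.length w ≤ cs.length (w * v)} × Γ))
            (h : ∀ v ∈ WJ2, cs.length (q.1.1 * q.2.1.1) ≤ cs.length (q.1.1 * q.2.1.1 * v)),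
            c2 q = c (⟨q.1.1 * q.2.1.1, h⟩, q.2.2)) :=
  nested_parabolic_IC_bases_general M cs J₁ J₂ hJ WJ1 WJ2 hWJ1 hWJ2 H Tb hTmul HJ1 hTmem E Γb M1
    unit1 barM1 c1 hc1 tE unit η hη_unit hη_equiv barT

end
end

section
/- Let W = S_n, J = J_{n−1} = {s₁,…,s_{n−2}}, and b_k = s_k s_{k+1} ⋯ s_{n−1} for k ∈ {1,…,n−1}, b_n = 1 (the minimal left coset representatives of W_J). Let Γ be a W_J-graph and γ ∈ Γ with K := {s_k, …, s_{n−2}} ⊆ L(γ). Then the canonical basis element C̃′_{b_k,γ} of H ⊗_{H_J} AΓ satisfies C̃′_{b_k,γ} = (1/[n−k]!)· C′_{b_k · w₀(K)} ⊠ γ = (T_{b_k} + u⁻¹ T_{b_{k+1}} + ⋯ + u^{k−n} T_{b_n}) ⊠ γ, where w₀(K) is the longest element of W_K, [m] = (u^m − u^{−m})/(u − u⁻¹), and [m]! = [1][2]⋯[m]. -/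
/-!
# Statement 6 (Proposition: explicit canonical basis elements `C̃′_{b_k,γ}`)

`W = S_n` (`n = m+1`) with simple reflections `s₁, …, s_{n−1}` (indexed here by `Fin m`,
the index `i` corresponding to `s_{i+1}`), `J = J_{n−1} = {s₁,…,s_{n−2}}`, and
`b_k = s_k s_{k+1} ⋯ s_{n−1}` for `k ∈ [n−1]`, `b_n = 1` — the minimal left coset
representatives of `W_J`.  `H` is the Hecke algebra of `W` over `A = ℤ[u,u⁻¹]`, with
standard basis `{T_w}`, Kazhdan–Lusztig basis `{C′_w}`, and bar involution.  `Γ` is a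
`W_J`-graph with descent sets `L(γ)` and the induced module `H ⊗_{H_J} AΓ` carries the
standard basis `T_w ⊠ γ` (`w ∈ W^J`) and the Howlett–Yin canonical basis `{C̃′_{w,γ}}`.

**Statement.** If `K := {s_k, …, s_{n−2}} ⊆ L(γ)` then
`C̃′_{b_k,γ} = (1/[n−k]!) C′_{b_k ⋅ w₀(K)} ⊠ γ = (T_{b_k} + u⁻¹ T_{b_{k+1}} + ⋯ + u^{k−n} T_{b_n}) ⊠ γ`,
where `w₀(K)` is the longest element of `W_K`, `[j] = (u^j − u^{−j})/(u − u⁻¹)` and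
`[j]! = [1]⋯[j]`.  (The first equality is stated denominator-free, as
`[n−k]! • C̃′_{b_k,γ} = C′_{b_k ⋅ w₀(K)} ⊠ γ`.)
-/

noncomputable section
open LaurentPolynomial
open scoped Classical

/-- `[2] = u + u⁻¹`. -/
def qtwo : A := T 1 + T (-1)

/-- The quantum integer `[j] = u^{j−1} + u^{j−3} + ⋯ + u^{1−j} ∈ A`. -/
def qint (j : ℕ) : A := ∑ i ∈ Finset.range j, T ((j : ℤ) - 1 - 2 * i)

/-- The quantum factorial `[j]! = [1][2]⋯[j]`. -/
def qfact (j : ℕ) : A := ∏ i ∈ Finset.Icc 1 j, qint i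

/-- `c` is the IC/canonical basis for the standard basis `t` and involution `bar`. -/
structure IsCanonicalBasis {I E : Type*} [AddCommGroup E] [Module A E]
    (bar : E → E) (t : I → E) (c : I → E) : Prop where
  bar_invariant : ∀ i, bar (c i) = c i
  congruent : ∀ i, c i - t i ∈ uinvLattice t
  unique : ∀ d : I → E, (∀ i, bar (d i) = d i) → (∀ i, d i - t i ∈ uinvLattice t) → d = c

/-- `S_n` for `n = m+1`. -/
abbrev SymGrp (m : ℕ) := Equiv.Perm (Fin (m + 1))

/-- The simple reflection with index `i : Fin m` (the paper's `s_{i+1}`): the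
transposition of `i, i+1`. -/
def sg (m : ℕ) (i : Fin m) : SymGrp m := Equiv.swap i.castSucc i.succ

/-- The paper's `s_j` (`1 ≤ j ≤ n−1 = m`), with junk value `1` out of range. -/
def sgN (m : ℕ) (j : ℕ) : SymGrp m := if h : 1 ≤ j ∧ j ≤ m then sg m ⟨j - 1, by omega⟩ else 1

/-- The Coxeter length of `w ∈ S_n`: its number of inversions. -/
def len {m : ℕ} (w : SymGrp m) : ℕ :=
  (Finset.univ.filter fun p : Fin (m + 1) × Fin (m + 1) => p.1 < p.2 ∧ w p.2 < w p.1).card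

/-- The parabolic subgroup `W_K` generated by the simple reflections indexed by `K`. -/
def parab (m : ℕ) (K : Set (Fin m)) : Subgroup (SymGrp m) := Subgroup.closure (sg m '' K)

/-- `w` is the minimal-length representative of its left coset `w W_K` (i.e. `w ∈ W^K`). -/
def IsMinLeft {m : ℕ} (K : Set (Fin m)) (w : SymGrp m) : Prop :=
  ∀ v ∈ parab m K, len w ≤ len (w * v)

/-- `b_k = s_k s_{k+1} ⋯ s_{n−1}` (1-indexed `k ∈ [n]`; `b_n = 1`). -/
def bElt (m : ℕ) (k : ℕ) : SymGrp m := ((List.range' k (m + 1 - k)).map (sgN m)).prod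

/-- The `W_K`-graph operator `C_{s_i}` on `E = AΓ`, given by the `W`-graph formula. -/
def graphOp {m : ℕ} {Γ E : Type*} [AddCommGroup E] [Module A E] (Γb : Module.Basis Γ A E)
    (Lset : Γ → Set (Fin m)) (mu : Γ → Γ → ℤ) (i : Fin m) : E →ₗ[A] E :=
  Γb.constr ℕ fun γ =>
    if i ∈ Lset γ then qtwo • Γb γ
    else ∑ᶠ δ ∈ {δ : Γ | i ∈ Lset δ}, mu δ γ • Γb δ

/-!
Let `W' ⊆ W''` be the parabolic subgroups generated by `s_{a+1}, …, s_{b-1}` and by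
`s_{a+1}, …, s_b`, and let `D` be the minimal left coset representatives of `W'` in `W''` (the
cycles `s_{j+1} ⋯ s_b`, of length `b - j`). For `x` in an `H`-module on which the `T_s`, `s ∈ W'`,
act by `u`, the element `X(x) = ∑_{d ∈ D} u^{ℓ(d) - (b - a)} T_d x` is bar invariant whenever `x`
is: its partial sums `X_j` over the cycles starting at `s_{j+1}` satisfy
`C′_{s_{j+1}} X_{j+1} = X_j + X_{j+2}`, so descending induction on `j` applies.

Applied in `H` to `x = u^{-ℓ(w₀')} ∑_{y ∈ W'} u^{ℓ(y)} T_y`, it gives the same sum over `W''`,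
because `W'' = D W'` with lengths adding. By induction on the block these sums are bar invariant;
being congruent to `T_{w₀}`, they are the elements `C′_{w₀}`, and they act by `[p]!` on any vector
on which the `T_s` of the block act by `u`.

Applied in the induced module to `x = 1 ⊠ γ`, with `K ⊆ L(γ)`, it shows that
`∑_j u^{k-j} T_{b_j} ⊠ γ` is bar invariant; being congruent to `T_{b_k} ⊠ γ`, it is `C̃′_{b_k,γ}`.
Finally `b_k w₀(K)` is the longest element of the subgroup generated by `s_k, …, s_{n−1}`, so
`C′_{b_k w₀(K)} ⊠ γ = X(C′_{w₀(K)} ⊠ γ) = [n-k]! X(1 ⊠ γ)`.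
-/

namespace BkFormula

section CanonicalBasis

variable {I E : Type*} [AddCommGroup E] [Module A E] {t : I → E}

lemma T_smul_mem_uinvLattice {n : ℤ} (hn : n < 0) (i : I) : (T n : A) • t i ∈ uinvLattice t :=
  Submodule.subset_span ⟨(-n - 1).toNat, i, by rw [Int.toNat_of_nonneg (by omega)]; ring_nf⟩

lemma sum_T_smul_sub_mem_uinvLattice {f : ℕ → I} {k n : ℕ} (hkn : k ≤ n) :
    ∑ j ∈ Finset.Icc k n, (T ((k : ℤ) - j) : A) • t (f j) - t (f k) ∈ uinvLattice t := by
  rw [← Finset.insert_Icc_add_one_left_eq_Icc hkn, Finset.sum_insert (by simp), sub_self, T_zero,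
    one_smul, add_sub_cancel_left]
  exact Submodule.sum_mem _ fun j hj => T_smul_mem_uinvLattice (by simp at hj; omega) _

lemma IsCanonicalBasis.apply_eq {bar : E → E} {c : I → E} (hc : IsCanonicalBasis bar t c)
    {i : I} {x : E} (hbar : bar x = x) (hx : x - t i ∈ uinvLattice t) : c i = x := by
  have h := hc.unique (Function.update c i x)
    (fun j => by rcases eq_or_ne j i with rfl | hj <;> simp [*, hc.bar_invariant])
    (fun j => by rcases eq_or_ne j i with rfl | hj <;> simp [*, hc.congruent])
  simpa using (congrFun h i).symm

end CanonicalBasis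

section Perm

variable {m : ℕ}

lemma sg_apply_val (i : Fin m) (z : Fin (m + 1)) :
    ((sg m i z : Fin (m + 1)) : ℕ) =
      if (z : ℕ) = i then (i : ℕ) + 1 else if (z : ℕ) = (i : ℕ) + 1 then (i : ℕ) else z := by
  unfold sg
  rw [Equiv.swap_apply_def]
  split_ifs <;> simp_all [Fin.ext_iff]

lemma sg_mul_sg_mul (i : Fin m) (w : SymGrp m) : sg m i * (sg m i * w) = w := by
  rw [← mul_assoc, sg, Equiv.swap_mul_self, one_mul]

lemma inv_sg_mul_castSucc (i : Fin m) (w : SymGrp m) :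
    (sg m i * w)⁻¹ i.castSucc = w⁻¹ i.succ := by
  rw [mul_inv_rev, sg, Equiv.swap_inv, Equiv.Perm.mul_apply, Equiv.swap_apply_left]

lemma inv_sg_mul_succ (i : Fin m) (w : SymGrp m) :
    (sg m i * w)⁻¹ i.succ = w⁻¹ i.castSucc := by
  rw [mul_inv_rev, sg, Equiv.swap_inv, Equiv.Perm.mul_apply, Equiv.swap_apply_right]

lemma inv_apply_castSucc_ne_succ (w : SymGrp m) (i : Fin m) :
    w⁻¹ i.castSucc ≠ w⁻¹ i.succ :=
  w⁻¹.injective.ne (Fin.castSucc_lt_succ (i := i)).ne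

def inversions (w : SymGrp m) : Finset (Fin (m + 1) × Fin (m + 1)) :=
  Finset.univ.filter fun p => p.1 < p.2 ∧ w p.2 < w p.1

lemma mem_inversions {w : SymGrp m} {p : Fin (m + 1) × Fin (m + 1)} :
    p ∈ inversions w ↔ p.1 < p.2 ∧ w p.2 < w p.1 := by
  simp [inversions]

lemma sg_lt_sg_iff (i : Fin m) (x y : Fin (m + 1)) :
    sg m i x < sg m i y ↔
      ((x : ℕ) = (i : ℕ) + 1 ∧ (y : ℕ) = i) ∨ (x < y ∧ ¬((x : ℕ) = i ∧ (y : ℕ) = (i : ℕ) + 1)) := by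
  simp only [Fin.lt_def, sg_apply_val]
  split_ifs <;> omega

lemma inversions_sg_mul (i : Fin m) (w : SymGrp m) (h : w⁻¹ i.castSucc < w⁻¹ i.succ) :
    inversions (sg m i * w) = insert (w⁻¹ i.castSucc, w⁻¹ i.succ) (inversions w) := by
  ext ⟨p, q⟩
  have hval : ∀ (z : Fin (m + 1)) (x : Fin (m + 1)), (w z : ℕ) = x ↔ z = w⁻¹ x := fun z x => by
    rw [← Fin.ext_iff, Equiv.Perm.eq_inv_iff_eq]
  simp only [mem_inversions, Finset.mem_insert, Prod.mk.injEq, Equiv.Perm.mul_apply,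
    sg_lt_sg_iff]
  rw [show (i : ℕ) + 1 = (i.succ : ℕ) from rfl, show (i : ℕ) = (i.castSucc : ℕ) from rfl,
    hval q, hval q, hval p, hval p]
  constructor
  · rintro ⟨hpq, ⟨h1, h2⟩ | ⟨h1, h2⟩⟩
    · exact Or.inl ⟨h2, h1⟩
    · exact Or.inr ⟨hpq, h1⟩
  · rintro (⟨rfl, rfl⟩ | ⟨hpq, hinv⟩)
    · exact ⟨h, Or.inl ⟨rfl, rfl⟩⟩
    · refine ⟨hpq, Or.inr ⟨hinv, ?_⟩⟩
      rintro ⟨rfl, rfl⟩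
      exact absurd h (not_lt.2 hpq.le)

lemma len_sg_mul_of_lt (i : Fin m) (w : SymGrp m) (h : w⁻¹ i.castSucc < w⁻¹ i.succ) :
    len (sg m i * w) = len w + 1 := by
  have hnew : (w⁻¹ i.castSucc, w⁻¹ i.succ) ∉ inversions w := by
    simp [mem_inversions, (Fin.castSucc_lt_succ (i := i)).le]
  rw [len, ← inversions, inversions_sg_mul i w h, Finset.card_insert_of_notMem hnew]
  rfl

lemma len_sg_mul_of_gt (i : Fin m) (w : SymGrp m) (h : w⁻¹ i.succ < w⁻¹ i.castSucc) :
    len w = len (sg m i * w) + 1 := by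
  conv_lhs => rw [← sg_mul_sg_mul i w]
  exact len_sg_mul_of_lt i _ (by rwa [inv_sg_mul_castSucc, inv_sg_mul_succ])

lemma len_one : len (1 : SymGrp m) = 0 := by
  rw [len, Finset.card_eq_zero, Finset.filter_eq_empty_iff]
  exact fun p _ h => lt_asymm h.1 h.2

lemma len_sg (i : Fin m) : len (sg m i) = 1 := by
  simpa [len_one] using len_sg_mul_of_lt i 1 (by simp)

lemma len_le_sq (w : SymGrp m) : len w ≤ (m + 1) * (m + 1) := by
  calc len w ≤ (Finset.univ : Finset (Fin (m + 1) × Fin (m + 1))).card :=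
        Finset.card_filter_le _ _
    _ = (m + 1) * (m + 1) := by simp

def blockPerms (m a b : ℕ) : Finset (SymGrp m) :=
  Finset.univ.filter fun w => ∀ p : Fin (m + 1), ((p : ℕ) < a ∨ b < p) → w p = p

variable {a b : ℕ}

lemma mem_blockPerms {w : SymGrp m} :
    w ∈ blockPerms m a b ↔ ∀ p : Fin (m + 1), ((p : ℕ) < a ∨ b < p) → w p = p := by
  simp [blockPerms]

lemma one_mem_blockPerms : (1 : SymGrp m) ∈ blockPerms m a b :=
  mem_blockPerms.2 fun _ _ => rfl

lemma mul_mem_blockPerms {v w : SymGrp m} (hv : v ∈ blockPerms m a b)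
    (hw : w ∈ blockPerms m a b) : v * w ∈ blockPerms m a b :=
  mem_blockPerms.2 fun p hp => by
    rw [Equiv.Perm.mul_apply, mem_blockPerms.1 hw p hp, mem_blockPerms.1 hv p hp]

lemma inv_mem_blockPerms {w : SymGrp m} (hw : w ∈ blockPerms m a b) :
    w⁻¹ ∈ blockPerms m a b :=
  mem_blockPerms.2 fun p hp => Equiv.Perm.inv_eq_iff_eq.2 (mem_blockPerms.1 hw p hp).symm

lemma blockPerms_mono {a' b' : ℕ} (ha : a' ≤ a) (hb : b ≤ b') :
    blockPerms m a b ⊆ blockPerms m a' b' :=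
  fun _ hw => mem_blockPerms.2 fun p hp => mem_blockPerms.1 hw p (by omega)

lemma sg_mem_blockPerms {i : Fin m} (ha : a ≤ i) (hb : (i : ℕ) + 1 ≤ b) :
    sg m i ∈ blockPerms m a b :=
  mem_blockPerms.2 fun p hp => Fin.ext (by rw [sg_apply_val]; split_ifs <;> omega)

lemma sg_mul_mem_blockPerms_iff {i : Fin m} (ha : a ≤ i) (hb : (i : ℕ) + 1 ≤ b)
    {w : SymGrp m} : sg m i * w ∈ blockPerms m a b ↔ w ∈ blockPerms m a b := by
  refine ⟨fun h => ?_, mul_mem_blockPerms (sg_mem_blockPerms ha hb)⟩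
  rw [← sg_mul_sg_mul i w]
  exact mul_mem_blockPerms (sg_mem_blockPerms ha hb) h

lemma blockPerms_apply {w : SymGrp m} (hw : w ∈ blockPerms m a b) (p : Fin (m + 1)) :
    (w p : ℕ) = p ∨ (a ≤ p ∧ (p : ℕ) ≤ b ∧ a ≤ (w p : ℕ) ∧ (w p : ℕ) ≤ b) := by
  by_cases hp : (p : ℕ) < a ∨ b < p
  · exact Or.inl (congrArg Fin.val (mem_blockPerms.1 hw p hp))
  by_cases hwp : (w p : ℕ) < a ∨ b < (w p : ℕ)
  · exact Or.inl (congrArg Fin.val (w.injective (mem_blockPerms.1 hw _ hwp)))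
  · exact Or.inr (by omega)

lemma blockPerms_of_le (h : b ≤ a) : blockPerms m a b = {1} := by
  refine Finset.eq_singleton_iff_unique_mem.2 ⟨one_mem_blockPerms, fun w hw => ?_⟩
  ext p
  rcases blockPerms_apply hw p with h' | h' <;> simp <;> omega

lemma eq_one_of_forall_apply_lt {w : SymGrp m} (h : ∀ i : Fin m, w i.castSucc < w i.succ) :
    w = 1 :=
  Equiv.ext fun p => congrFun (StrictMono.eq_id (Fin.strictMono_iff_lt_succ.2 h)) p

lemma apply_castSucc_lt_apply_succ {w : SymGrp m} (hw : w ∈ blockPerms m a b) {i : Fin m}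
    (hi : ¬(a ≤ i ∧ (i : ℕ) + 1 ≤ b)) : w i.castSucc < w i.succ := by
  have h1 := blockPerms_apply hw i.castSucc
  have h2 := blockPerms_apply hw i.succ
  simp only [Fin.val_castSucc, Fin.val_succ] at h1 h2
  rw [Fin.lt_def]
  omega

lemma exists_descent {w : SymGrp m} (hw : w ∈ blockPerms m a b) (hne : w ≠ 1) :
    ∃ i : Fin m, a ≤ i ∧ (i : ℕ) + 1 ≤ b ∧ w⁻¹ i.succ < w⁻¹ i.castSucc := by
  by_contra! h
  refine hne (inv_eq_one.1 (eq_one_of_forall_apply_lt fun i => ?_))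
  by_cases hi : a ≤ i ∧ (i : ℕ) + 1 ≤ b
  · exact (h i hi.1 hi.2).lt_of_ne (inv_apply_castSucc_ne_succ w i)
  · exact apply_castSucc_lt_apply_succ (inv_mem_blockPerms hw) hi

def blockRevFun (m a b : ℕ) (p : Fin (m + 1)) : Fin (m + 1) :=
  if h : a ≤ (p : ℕ) ∧ (p : ℕ) ≤ b ∧ b ≤ m then ⟨a + b - p, by omega⟩ else p

lemma blockRevFun_involutive (m a b : ℕ) : Function.Involutive (blockRevFun m a b) := by
  intro p
  unfold blockRevFun
  split_ifs with h1 h2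
  · exact Fin.ext (by simp; omega)
  · exact absurd ⟨by simp; omega, by simp; omega, h1.2.2⟩ h2
  · rfl

def blockRev (m a b : ℕ) : SymGrp m := (blockRevFun_involutive m a b).toPerm

lemma blockRev_apply (hb : b ≤ m) (p : Fin (m + 1)) :
    (blockRev m a b p : ℕ) = if a ≤ (p : ℕ) ∧ (p : ℕ) ≤ b then a + b - p else p := by
  change (blockRevFun m a b p : ℕ) = _
  unfold blockRevFun
  split_ifs <;> simp_all

lemma blockRev_mem_blockPerms (hb : b ≤ m) : blockRev m a b ∈ blockPerms m a b :=
  mem_blockPerms.2 fun p hp => Fin.ext (by rw [blockRev_apply hb]; split_ifs <;> omega)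

lemma blockRev_of_le (h : b ≤ a) : blockRev m a b = 1 := by
  ext p
  change (blockRevFun m a b p : ℕ) = p
  unfold blockRevFun
  split_ifs <;> simp; omega

lemma exists_ascent (hb : b ≤ m) {w : SymGrp m} (hw : w ∈ blockPerms m a b)
    (hne : w ≠ blockRev m a b) :
    ∃ i : Fin m, a ≤ i ∧ (i : ℕ) + 1 ≤ b ∧ w⁻¹ i.castSucc < w⁻¹ i.succ := by
  by_contra! h
  refine hne (mul_inv_eq_one.1 (eq_one_of_forall_apply_lt fun i => ?_)).symm
  by_cases hi : a ≤ i ∧ (i : ℕ) + 1 ≤ b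
  · have hlt := (h i hi.1 hi.2).lt_of_ne (inv_apply_castSucc_ne_succ w i).symm
    have h1 := blockPerms_apply (inv_mem_blockPerms hw) i.castSucc
    have h2 := blockPerms_apply (inv_mem_blockPerms hw) i.succ
    simp only [Fin.val_castSucc, Fin.val_succ] at h1 h2
    rw [Fin.lt_def] at hlt ⊢
    rw [Equiv.Perm.mul_apply, Equiv.Perm.mul_apply, blockRev_apply hb, blockRev_apply hb]
    split_ifs <;> omega
  · exact apply_castSucc_lt_apply_succ
      (mul_mem_blockPerms (blockRev_mem_blockPerms hb) (inv_mem_blockPerms hw)) hi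

theorem len_lt_len_blockRev (hb : b ≤ m) {w : SymGrp m} (hw : w ∈ blockPerms m a b)
    (hne : w ≠ blockRev m a b) : len w < len (blockRev m a b) := by
  obtain ⟨i, hia, hib, hasc⟩ := exists_ascent hb hw hne
  have hlen := len_sg_mul_of_lt i w hasc
  by_cases h : sg m i * w = blockRev m a b
  · rw [← h]
    omega
  · have := len_lt_len_blockRev hb (mul_mem_blockPerms (sg_mem_blockPerms hia hib) hw) h
    omega
termination_by (m + 1) * (m + 1) - len w
decreasing_by
  have := len_le_sq (sg m i * w)
  omega

def cycleIcc (m a b : ℕ) : SymGrp m := ((List.range' (a + 1) (b - a)).map (sgN m)).prod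

lemma cycleIcc_of_le (h : b ≤ a) : cycleIcc m a b = 1 := by
  simp [cycleIcc, Nat.sub_eq_zero_of_le h]

lemma cycleIcc_eq_sg_mul (hab : a < b) (hb : b ≤ m) :
    cycleIcc m a b = sg m ⟨a, by omega⟩ * cycleIcc m (a + 1) b := by
  rw [cycleIcc, show b - a = b - (a + 1) + 1 by omega, List.range'_succ, List.map_cons,
    List.prod_cons, sgN, dif_pos ⟨by omega, by omega⟩]
  rfl

lemma bElt_eq_cycleIcc {j : ℕ} (hj : 1 ≤ j) : bElt m j = cycleIcc m (j - 1) m := by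
  rw [bElt, cycleIcc, Nat.sub_add_cancel hj, show m - (j - 1) = m + 1 - j by omega]

theorem cycleIcc_apply_val {a b : ℕ} (hb : b ≤ m) (p : Fin (m + 1)) :
    (cycleIcc m a b p : ℕ) =
      if (p : ℕ) < a ∨ b < p then (p : ℕ) else if (p : ℕ) = b then a else (p : ℕ) + 1 := by
  rcases le_or_gt b a with h | h
  · rw [cycleIcc_of_le h, Equiv.Perm.one_apply]
    split_ifs <;> omega
  · rw [cycleIcc_eq_sg_mul h hb, Equiv.Perm.mul_apply, sg_apply_val,
      cycleIcc_apply_val (a := a + 1) hb]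
    split_ifs <;> simp_all <;> omega
termination_by b - a

lemma cycleIcc_mem_blockPerms (hb : b ≤ m) : cycleIcc m a b ∈ blockPerms m a b :=
  mem_blockPerms.2 fun p hp => Fin.ext (by rw [cycleIcc_apply_val hb, if_pos hp])

theorem len_cycleIcc_mul {a b j : ℕ} (hb : b ≤ m) {v : SymGrp m}
    (hv : v ∈ blockPerms m a (b - 1)) (haj : a ≤ j) (hjb : j ≤ b) :
    len (cycleIcc m j b * v) = b - j + len v := by
  rcases hjb.eq_or_lt with rfl | hjb
  · rw [cycleIcc_of_le le_rfl, one_mul, Nat.sub_self, zero_add]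
  set i : Fin m := ⟨j, by omega⟩
  have hfix : cycleIcc m (j + 1) b i.castSucc = i.castSucc :=
    Fin.ext (by rw [cycleIcc_apply_val hb]; simp [i])
  have htop : cycleIcc m (j + 1) b ⟨b, by omega⟩ = i.succ :=
    Fin.ext (by rw [cycleIcc_apply_val hb]; simp [i]; omega)
  have hvb : v ⟨b, by omega⟩ = ⟨b, by omega⟩ := mem_blockPerms.1 hv _ (Or.inr (by simp; omega))
  have hasc : (cycleIcc m (j + 1) b * v)⁻¹ i.castSucc < (cycleIcc m (j + 1) b * v)⁻¹ i.succ := by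
    rw [mul_inv_rev, Equiv.Perm.mul_apply, Equiv.Perm.mul_apply,
      Equiv.Perm.inv_eq_iff_eq.2 hfix.symm, Equiv.Perm.inv_eq_iff_eq.2 htop.symm,
      Equiv.Perm.inv_eq_iff_eq.2 hvb.symm, Fin.lt_def]
    have := blockPerms_apply (inv_mem_blockPerms hv) i.castSucc
    simp only [Fin.val_castSucc, i] at this ⊢
    omega
  rw [cycleIcc_eq_sg_mul hjb hb, mul_assoc, len_sg_mul_of_lt _ _ hasc,
    len_cycleIcc_mul hb hv (by omega) hjb]
  omega
termination_by b - j

lemma len_cycleIcc (hab : a ≤ b) (hb : b ≤ m) : len (cycleIcc m a b) = b - a := by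
  simpa [len_one] using len_cycleIcc_mul hb (one_mem_blockPerms (a := a)) le_rfl hab

lemma blockRev_eq_cycleIcc_mul (hab : a ≤ b) (hb : b ≤ m) :
    blockRev m a b = cycleIcc m a b * blockRev m a (b - 1) := by
  rcases hab.eq_or_lt with rfl | hlt
  · rw [blockRev_of_le le_rfl, cycleIcc_of_le le_rfl, blockRev_of_le (Nat.sub_le _ _), one_mul]
  ext p
  rw [Equiv.Perm.mul_apply, cycleIcc_apply_val hb, blockRev_apply (b := b - 1) (by omega),
    blockRev_apply hb]
  split_ifs <;> omega

lemma len_blockRev (hab : a ≤ b) (hb : b ≤ m) :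
    len (blockRev m a b) = b - a + len (blockRev m a (b - 1)) := by
  rw [blockRev_eq_cycleIcc_mul hab hb]
  exact len_cycleIcc_mul hb (blockRev_mem_blockPerms (by omega)) le_rfl hab

lemma cycleIcc_mul_mem_blockPerms {j : ℕ} (hb : b ≤ m) (haj : a ≤ j)
    {v : SymGrp m} (hv : v ∈ blockPerms m a (b - 1)) : cycleIcc m j b * v ∈ blockPerms m a b :=
  mul_mem_blockPerms (blockPerms_mono haj le_rfl (cycleIcc_mem_blockPerms hb))
    (blockPerms_mono le_rfl (Nat.sub_le _ _) hv)

lemma cycleIcc_mul_apply_top {j : ℕ} (hab : a < b) (hb : b ≤ m) (hjb : j ≤ b)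
    {v : SymGrp m} (hv : v ∈ blockPerms m a (b - 1)) :
    ((cycleIcc m j b * v) ⟨b, by omega⟩ : ℕ) = j := by
  rw [Equiv.Perm.mul_apply, mem_blockPerms.1 hv _ (Or.inr (by simp; omega)),
    cycleIcc_apply_val hb]
  simp only
  split_ifs <;> omega

lemma cycleIcc_inv_mul_mem_blockPerms (hab : a < b) (hb : b ≤ m) {y : SymGrp m}
    (hy : y ∈ blockPerms m a b) :
    (cycleIcc m (y ⟨b, by omega⟩) b)⁻¹ * y ∈ blockPerms m a (b - 1) := by
  refine mem_blockPerms.2 fun p hp => ?_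
  rw [Equiv.Perm.mul_apply, Equiv.Perm.inv_eq_iff_eq]
  have h2 := blockPerms_apply hy ⟨b, by omega⟩
  simp only at h2
  refine Fin.ext ?_
  rw [cycleIcc_apply_val hb]
  by_cases hpb : (p : ℕ) = b
  · rw [if_neg (by omega), if_pos hpb, show p = ⟨b, by omega⟩ from Fin.ext hpb]
  · have h1 := blockPerms_apply hy p
    split_ifs <;> omega

/-- `y ↦ (y b, (cycleIcc (y b) b)⁻¹ * y)` is the bijection behind this coset decomposition. -/
lemma sum_blockPerms_eq {M : Type*} [AddCommMonoid M] (hab : a < b) (hb : b ≤ m)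
    (f : SymGrp m → M) :
    ∑ y ∈ blockPerms m a b, f y =
      ∑ j ∈ Finset.Icc a b, ∑ v ∈ blockPerms m a (b - 1), f (cycleIcc m j b * v) := by
  rw [← Finset.sum_product']
  refine Finset.sum_nbij' (fun y => ((y ⟨b, by omega⟩ : ℕ), (cycleIcc m (y ⟨b, by omega⟩) b)⁻¹ * y))
    (fun p => cycleIcc m p.1 b * p.2) (fun y hy => ?_) (fun p hp => ?_) (fun y _ => ?_)
    (fun p hp => ?_) (fun y _ => ?_)
  · have := blockPerms_apply hy ⟨b, by omega⟩
    simp only at this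
    simp only [Finset.mem_product, Finset.mem_Icc]
    exact ⟨by omega, cycleIcc_inv_mul_mem_blockPerms hab hb hy⟩
  · simp only [Finset.mem_product, Finset.mem_Icc] at hp
    exact cycleIcc_mul_mem_blockPerms hb hp.1.1 hp.2
  · exact mul_inv_cancel_left _ _
  · simp only [Finset.mem_product, Finset.mem_Icc] at hp
    rw [cycleIcc_mul_apply_top hab hb hp.1.2 hp.2, inv_mul_cancel_left]
  · rw [mul_inv_cancel_left]

lemma sg_mul_comm_of_mem_blockPerms {i : Fin m} (hi : (i : ℕ) + 1 < a) {w : SymGrp m}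
    (hw : w ∈ blockPerms m a b) : sg m i * w = w * sg m i := by
  rw [sg, Equiv.mul_swap_eq_swap_mul, mem_blockPerms.1 hw _ (Or.inl (by simp; omega)),
    mem_blockPerms.1 hw _ (Or.inl (by simp; omega))]

theorem mem_parab_of_mem_blockPerms {w : SymGrp m} (hw : w ∈ blockPerms m a b) :
    w ∈ parab m {i | a ≤ (i : ℕ) ∧ (i : ℕ) + 1 ≤ b} := by
  by_cases h1 : w = 1
  · exact h1 ▸ one_mem _
  obtain ⟨i, hia, hib, hdesc⟩ := exists_descent hw h1
  rw [← sg_mul_sg_mul i w]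
  exact mul_mem (Subgroup.subset_closure ⟨i, ⟨hia, hib⟩, rfl⟩)
    (mem_parab_of_mem_blockPerms ((sg_mul_mem_blockPerms_iff hia hib).2 hw))
termination_by len w
decreasing_by
  have := len_sg_mul_of_gt i w hdesc
  omega

lemma mem_parab_iff {w : SymGrp m} :
    w ∈ parab m {i | a ≤ (i : ℕ) ∧ (i : ℕ) + 1 ≤ b} ↔ w ∈ blockPerms m a b := by
  refine ⟨fun hw => ?_, mem_parab_of_mem_blockPerms⟩
  induction hw using Subgroup.closure_induction with
  | mem x hx =>
    obtain ⟨i, hi, rfl⟩ := hx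
    exact sg_mem_blockPerms hi.1 hi.2
  | one => exact one_mem_blockPerms
  | mul x y _ _ hx hy => exact mul_mem_blockPerms hx hy
  | inv x _ hx => exact inv_mem_blockPerms hx


lemma eq_blockRev_of_forall_len_le (hb : b ≤ m) {w : SymGrp m}
    (hw : w ∈ parab m {i | a ≤ (i : ℕ) ∧ (i : ℕ) + 1 ≤ b})
    (hmax : ∀ v ∈ parab m {i | a ≤ (i : ℕ) ∧ (i : ℕ) + 1 ≤ b}, len v ≤ len w) :
    w = blockRev m a b := by
  by_contra hne
  exact absurd (len_lt_len_blockRev hb (mem_parab_iff.1 hw) hne)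
    (not_lt.2 (hmax _ (mem_parab_iff.2 (blockRev_mem_blockPerms hb))))
end Perm

lemma Abar_T (n : ℤ) : Abar (T n) = T (-n) :=
  invert_T n

lemma sum_T_Icc_eq_qint (a b : ℕ) :
    ∑ j ∈ Finset.Icc a b, (T ((a : ℤ) + b - 2 * j) : A) = qint (b + 1 - a) := by
  rw [← Finset.Ico_add_one_right_eq_Icc, Finset.sum_Ico_eq_sum_range, qint]
  refine Finset.sum_congr rfl fun i hi => ?_
  rw [Finset.mem_range] at hi
  congr 1
  push_cast [Nat.cast_sub (show a ≤ b + 1 by omega)]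
  ring

lemma qfact_of_le_one {n : ℕ} (hn : n ≤ 1) : qfact n = 1 := by
  interval_cases n <;> simp [qfact, qint]

lemma qfact_succ (n : ℕ) : qfact (n + 1) = qfact n * qint (n + 1) :=
  Finset.prod_Icc_succ_top (by omega) _

section Hecke

variable {m : ℕ} {H : Type*} [Ring H] [Algebra A H]

structure IsHeckeBasis (Tb : Module.Basis (SymGrp m) A H) : Prop where
  one : Tb 1 = 1
  mul : ∀ v w : SymGrp m, len (v * w) = len v + len w → Tb (v * w) = Tb v * Tb w
  sg_mul_sg : ∀ i : Fin m, Tb (sg m i) * Tb (sg m i) = (T 1 - T (-1) : A) • Tb (sg m i) + 1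

def klSimple (Tb : Module.Basis (SymGrp m) A H) (i : Fin m) : H :=
  Tb (sg m i) + (T (-1) : A) • 1

namespace IsHeckeBasis

variable {Tb : Module.Basis (SymGrp m) A H} (hT : IsHeckeBasis Tb)
include hT

lemma sg_mul_of_lt {i : Fin m} {w : SymGrp m} (h : w⁻¹ i.castSucc < w⁻¹ i.succ) :
    Tb (sg m i) * Tb w = Tb (sg m i * w) :=
  (hT.mul _ _ (by rw [len_sg_mul_of_lt i w h, len_sg]; omega)).symm

lemma sg_mul_of_gt {i : Fin m} {w : SymGrp m} (h : w⁻¹ i.succ < w⁻¹ i.castSucc) :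
    Tb (sg m i) * Tb w = Tb (sg m i * w) + (T 1 - T (-1) : A) • Tb w := by
  have h1 : Tb (sg m i) * Tb (sg m i * w) = Tb w := by
    rw [hT.sg_mul_of_lt (by rwa [inv_sg_mul_castSucc, inv_sg_mul_succ]), sg_mul_sg_mul]
  rw [← h1, ← mul_assoc, hT.sg_mul_sg, add_mul, smul_mul_assoc, one_mul, add_comm]

lemma sg_mul (i : Fin m) (w : SymGrp m) :
    Tb (sg m i) * Tb w = Tb (sg m i * w) +
      if w⁻¹ i.succ < w⁻¹ i.castSucc then (T 1 - T (-1) : A) • Tb w else 0 := by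
  split_ifs with h
  · exact hT.sg_mul_of_gt h
  · rw [add_zero, hT.sg_mul_of_lt ((not_lt.1 h).lt_of_ne (inv_apply_castSucc_ne_succ w i))]

lemma sg_mul_sum {i : Fin m} {B : Finset (SymGrp m)} (hB : ∀ y, sg m i * y ∈ B ↔ y ∈ B)
    (c : SymGrp m → A) :
    Tb (sg m i) * ∑ y ∈ B, c y • Tb y =
      ∑ y ∈ B, (c (sg m i * y) +
        if y⁻¹ i.succ < y⁻¹ i.castSucc then (T 1 - T (-1) : A) * c y else 0) • Tb y := by
  simp only [Finset.mul_sum, mul_smul_comm, hT.sg_mul, smul_add, add_smul,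
    Finset.sum_add_distrib]
  congr 1
  · exact Finset.sum_nbij' (sg m i * ·) (sg m i * ·) (fun y hy => (hB y).2 hy)
      (fun y hy => (hB y).2 hy) (fun y _ => sg_mul_sg_mul i y) (fun y _ => sg_mul_sg_mul i y)
      (fun y _ => by rw [sg_mul_sg_mul])
  · refine Finset.sum_congr rfl fun y _ => ?_
    split_ifs <;> simp [mul_smul, smul_comm (c y)]

lemma basis_cycleIcc_eq_mul {a b : ℕ} (hab : a < b) (hb : b ≤ m) :
    Tb (cycleIcc m a b) = Tb (sg m ⟨a, by omega⟩) * Tb (cycleIcc m (a + 1) b) := by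
  rw [cycleIcc_eq_sg_mul hab hb]
  exact hT.mul _ _ (by rw [← cycleIcc_eq_sg_mul hab hb, len_sg, len_cycleIcc hab.le hb,
    len_cycleIcc hab hb]; omega)

lemma basis_cycleIcc_mul {a b j : ℕ} (hb : b ≤ m) {v : SymGrp m}
    (hv : v ∈ blockPerms m a (b - 1)) (haj : a ≤ j) (hjb : j ≤ b) :
    Tb (cycleIcc m j b * v) = Tb (cycleIcc m j b) * Tb v :=
  hT.mul _ _ (by rw [len_cycleIcc_mul hb hv haj hjb, len_cycleIcc hjb hb])

lemma sg_mul_comm {a b : ℕ} {i : Fin m} (hi : (i : ℕ) + 1 < a) {w : SymGrp m}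
    (hw : w ∈ blockPerms m a b) : Tb (sg m i) * Tb w = Tb w * Tb (sg m i) := by
  have hfix : ∀ p : Fin (m + 1), (p : ℕ) ≤ i + 1 → w⁻¹ p = p := fun p hp =>
    mem_blockPerms.1 (inv_mem_blockPerms hw) p (Or.inl (by omega))
  have hasc : w⁻¹ i.castSucc < w⁻¹ i.succ := by
    rw [hfix _ (by simp), hfix _ (by simp)]
    exact Fin.castSucc_lt_succ
  rw [hT.sg_mul_of_lt hasc, sg_mul_comm_of_mem_blockPerms hi hw]
  exact hT.mul _ _ (by
    rw [← sg_mul_comm_of_mem_blockPerms hi hw, len_sg_mul_of_lt i w hasc, len_sg])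

lemma eq_sub_of_mul_basis_sg_eq_one {i : Fin m} {y : H} (hy : y * Tb (sg m i) = 1) :
    y = Tb (sg m i) - (T 1 - T (-1) : A) • 1 := by
  have hinv : Tb (sg m i) * (Tb (sg m i) - (T 1 - T (-1) : A) • 1) = 1 := by
    rw [mul_sub, hT.sg_mul_sg, mul_smul_comm, mul_one, add_sub_cancel_left]
  calc y = y * (Tb (sg m i) * (Tb (sg m i) - (T 1 - T (-1) : A) • 1)) := by rw [hinv, mul_one]
    _ = _ := by rw [← mul_assoc, hy, one_mul]

lemma bar_klSimple (barH : H →+* H) (hsmul : ∀ (a : A) (h : H), barH (a • h) = Abar a • barH h)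
    {i : Fin m} (hinv : barH (Tb (sg m i)) * Tb (sg m i) = 1) :
    barH (klSimple Tb i) = klSimple Tb i := by
  rw [klSimple, map_add, hsmul, map_one, Abar_T, hT.eq_sub_of_mul_basis_sg_eq_one hinv,
    neg_neg, sub_smul]
  abel

end IsHeckeBasis

end Hecke

section CosetSum

variable {m : ℕ} {H : Type*} [Ring H] [Algebra A H] {Tb : Module.Basis (SymGrp m) A H}
  {M : Type*} [AddCommGroup M] [Module A M] [Module H M] [IsScalarTower A H M]

def cosetElt (Tb : Module.Basis (SymGrp m) A H) (a b : ℕ) : H :=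
  ∑ j ∈ Finset.Icc a b, (T ((a : ℤ) - j) : A) • Tb (cycleIcc m j b)

lemma cosetElt_of_lt {a b : ℕ} (h : b < a) : cosetElt Tb a b = 0 := by
  rw [cosetElt, Finset.Icc_eq_empty (by omega), Finset.sum_empty]

lemma cosetElt_eq_add {a b : ℕ} (hab : a ≤ b) :
    cosetElt Tb a b = Tb (cycleIcc m a b) + (T (-1) : A) • cosetElt Tb (a + 1) b := by
  rw [cosetElt, ← Finset.insert_Icc_add_one_left_eq_Icc hab, Finset.sum_insert (by simp),
    sub_self, T_zero, one_smul, cosetElt, Finset.smul_sum]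
  congr 1
  refine Finset.sum_congr rfl fun j _ => ?_
  rw [smul_smul, ← T_add]
  congr 2
  push_cast
  ring

lemma sum_bElt_smul_eq {k : ℕ} (hk : 1 ≤ k) (x : M) :
    ∑ j ∈ Finset.Icc k (m + 1), (T ((k : ℤ) - j) : A) • (Tb (bElt m j) • x) =
      cosetElt Tb (k - 1) m • x := by
  obtain ⟨k, rfl⟩ : ∃ k', k = k' + 1 := ⟨k - 1, by omega⟩
  rw [Nat.add_sub_cancel, cosetElt, Finset.sum_smul, ← Finset.map_add_right_Icc, Finset.sum_map]
  refine Finset.sum_congr rfl fun j _ => ?_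
  rw [addRightEmbedding_apply, bElt_eq_cycleIcc (by omega), Nat.add_sub_cancel, smul_assoc]
  push_cast
  ring_nf

lemma basis_sg_smul_eq_of_klSimple_smul {i : Fin m} {x : M} (h : klSimple Tb i • x = qtwo • x) :
    Tb (sg m i) • x = (T 1 : A) • x := by
  rw [klSimple, add_smul, smul_assoc, one_smul, qtwo, add_smul] at h
  exact add_right_cancel h

namespace IsHeckeBasis

variable (hT : IsHeckeBasis Tb)
include hT

lemma cosetElt_self (b : ℕ) : cosetElt Tb b b = 1 := by
  rw [cosetElt, Finset.Icc_self, Finset.sum_singleton, sub_self, T_zero, one_smul,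
    cycleIcc_of_le le_rfl, hT.one]

lemma sg_mul_cosetElt_comm {a b : ℕ} {i : Fin m} (hi : (i : ℕ) + 2 ≤ a) (hb : b ≤ m) :
    Tb (sg m i) * cosetElt Tb a b = cosetElt Tb a b * Tb (sg m i) := by
  rw [cosetElt, Finset.mul_sum, Finset.sum_mul]
  refine Finset.sum_congr rfl fun j hj => ?_
  rw [mul_smul_comm, smul_mul_assoc,
    hT.sg_mul_comm (by simp at hj; omega) (cycleIcc_mem_blockPerms hb)]

/-- Only `T (sg m a)` needs to act on `x` by `u`: it commutes with the cycles occurring in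
`cosetElt Tb (a + 2) b`. -/
lemma klSimple_smul_cosetElt_smul {a b : ℕ} (hab : a < b) (hb : b ≤ m) {x : M}
    (hx : a + 2 ≤ b → Tb (sg m ⟨a, by omega⟩) • x = (T 1 : A) • x) :
    klSimple Tb ⟨a, by omega⟩ • cosetElt Tb (a + 1) b • x =
      cosetElt Tb a b • x + cosetElt Tb (a + 2) b • x := by
  have hcomm : Tb (sg m ⟨a, by omega⟩) • cosetElt Tb (a + 2) b • x =
      (T 1 : A) • cosetElt Tb (a + 2) b • x := by
    rcases le_or_gt (a + 2) b with h | h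
    · rw [← mul_smul, hT.sg_mul_cosetElt_comm le_rfl hb, mul_smul, hx h, smul_comm]
    · rw [cosetElt_of_lt h, zero_smul, smul_zero, smul_zero]
  rw [cosetElt_eq_add (a := a) hab.le, cosetElt_eq_add (a := a + 1) hab,
    hT.basis_cycleIcc_eq_mul hab hb, klSimple]
  simp only [add_smul, smul_add, mul_smul, smul_assoc, one_smul]
  rw [smul_comm (Tb _) (T (-1) : A), hcomm, smul_smul (T (-1) : A) (T 1 : A), ← T_add]
  norm_num
  abel

theorem bar_cosetElt_smul (barH : H →+* H) (hC : ∀ i, barH (klSimple Tb i) = klSimple Tb i)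
    (barM : M →+ M) {x : M} (hbar : ∀ h : H, barM (h • x) = barH h • x) {a b : ℕ}
    (hb : b ≤ m) (hx : ∀ i : Fin m, a ≤ i → (i : ℕ) + 2 ≤ b → Tb (sg m i) • x = (T 1 : A) • x) :
    barM (cosetElt Tb a b • x) = cosetElt Tb a b • x := by
  rcases lt_trichotomy a b with hab | rfl | hab
  · rw [eq_sub_of_add_eq (hT.klSimple_smul_cosetElt_smul hab hb (hx ⟨a, by omega⟩ le_rfl)).symm,
      map_sub, ← mul_smul, hbar, map_mul, hC, mul_smul, ← hbar,
      bar_cosetElt_smul barH hC barM hbar hb (a := a + 1) fun i hi => hx i (by omega),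
      bar_cosetElt_smul barH hC barM hbar hb (a := a + 2) fun i hi => hx i (by omega), mul_smul]
  · rw [hT.cosetElt_self, one_smul]
    simpa using hbar 1
  · rw [cosetElt_of_lt hab, zero_smul, map_zero]
termination_by b + 1 - a

theorem basis_cycleIcc_smul {j b : ℕ} (hb : b ≤ m) (hjb : j ≤ b) {x : M}
    (hx : ∀ i : Fin m, j ≤ i → (i : ℕ) + 1 ≤ b → Tb (sg m i) • x = (T 1 : A) • x) :
    Tb (cycleIcc m j b) • x = (T ((b : ℤ) - j) : A) • x := by
  rcases hjb.eq_or_lt with rfl | h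
  · rw [cycleIcc_of_le le_rfl, hT.one, one_smul, sub_self, T_zero, one_smul]
  · rw [hT.basis_cycleIcc_eq_mul h hb, mul_smul,
      basis_cycleIcc_smul hb h fun i hi1 hi2 => hx i (by omega) hi2, smul_comm,
      hx ⟨j, by omega⟩ le_rfl (by simp; omega), smul_smul, ← T_add]
    congr 2
    push_cast
    ring
termination_by b - j

lemma cosetElt_smul_of_eigen {a b : ℕ} (hb : b ≤ m) {x : M}
    (hx : ∀ i : Fin m, a ≤ i → (i : ℕ) + 1 ≤ b → Tb (sg m i) • x = (T 1 : A) • x) :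
    cosetElt Tb a b • x = qint (b + 1 - a) • x := by
  rw [cosetElt, Finset.sum_smul, ← sum_T_Icc_eq_qint, Finset.sum_smul]
  refine Finset.sum_congr rfl fun j hj => ?_
  rw [Finset.mem_Icc] at hj
  rw [smul_assoc, hT.basis_cycleIcc_smul hb hj.2 fun i hi1 hi2 => hx i (by omega) hi2, smul_smul,
    ← T_add]
  congr 2
  ring

end IsHeckeBasis

end CosetSum

section Longest

variable {m : ℕ} {H : Type*} [Ring H] [Algebra A H] {Tb : Module.Basis (SymGrp m) A H}
  {M : Type*} [AddCommGroup M] [Module A M] [Module H M] [IsScalarTower A H M]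

def klLongest (Tb : Module.Basis (SymGrp m) A H) (a b : ℕ) : H :=
  ∑ y ∈ blockPerms m a b, (T ((len y : ℤ) - len (blockRev m a b)) : A) • Tb y

lemma klLongest_sub_mem_uinvLattice {a b : ℕ} (hb : b ≤ m) :
    klLongest Tb a b - Tb (blockRev m a b) ∈ uinvLattice Tb := by
  rw [klLongest, ← Finset.sum_erase_add _ _ (blockRev_mem_blockPerms hb), sub_self, T_zero,
    one_smul, add_sub_cancel_right]
  refine Submodule.sum_mem _ fun y hy => T_smul_mem_uinvLattice ?_ y
  have := len_lt_len_blockRev hb (Finset.mem_of_mem_erase hy) (Finset.ne_of_mem_erase hy)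
  omega

namespace IsHeckeBasis

variable (hT : IsHeckeBasis Tb)
include hT

lemma klLongest_of_le {a b : ℕ} (h : b ≤ a) : klLongest Tb a b = 1 := by
  rw [klLongest, blockPerms_of_le h, Finset.sum_singleton, blockRev_of_le h, sub_self, T_zero,
    one_smul, hT.one]

lemma klLongest_eq_cosetElt_mul {a b : ℕ} (hab : a < b) (hb : b ≤ m) :
    klLongest Tb a b = cosetElt Tb a b * klLongest Tb a (b - 1) := by
  rw [klLongest, sum_blockPerms_eq hab hb, cosetElt, Finset.sum_mul]
  refine Finset.sum_congr rfl fun j hj => ?_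
  rw [Finset.mem_Icc] at hj
  rw [klLongest, Finset.mul_sum]
  refine Finset.sum_congr rfl fun v hv => ?_
  rw [smul_mul_smul_comm, ← hT.basis_cycleIcc_mul hb hv hj.1 hj.2, ← T_add,
    len_cycleIcc_mul hb hv hj.1 hj.2, len_blockRev hab.le hb]
  congr 2
  push_cast [Nat.cast_sub hj.2, Nat.cast_sub hab.le]
  ring

lemma sg_mul_klLongest {a b : ℕ} {i : Fin m} (hia : a ≤ i) (hib : (i : ℕ) + 1 ≤ b) :
    Tb (sg m i) * klLongest Tb a b = (T 1 : A) • klLongest Tb a b := by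
  rw [klLongest, hT.sg_mul_sum fun y => sg_mul_mem_blockPerms_iff hia hib, Finset.smul_sum]
  refine Finset.sum_congr rfl fun y _ => ?_
  rw [smul_smul]
  congr 1
  split_ifs with h
  · have hlen := len_sg_mul_of_gt i y h
    rw [show (len (sg m i * y) : ℤ) = len y - 1 by omega, sub_mul, ← T_add, ← T_add]
    ring_nf
  · rw [len_sg_mul_of_lt i y ((not_lt.1 h).lt_of_ne (inv_apply_castSucc_ne_succ y i)), add_zero,
      ← T_add]
    push_cast
    ring_nf

theorem bar_klLongest (barH : H →+* H) (hC : ∀ i, barH (klSimple Tb i) = klSimple Tb i)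
    {a b : ℕ} (hb : b ≤ m) : barH (klLongest Tb a b) = klLongest Tb a b := by
  rcases le_or_gt b a with h | h
  · rw [hT.klLongest_of_le h, map_one]
  have ih := bar_klLongest barH hC (a := a) (b := b - 1) (by omega)
  rw [hT.klLongest_eq_cosetElt_mul h hb]
  exact hT.bar_cosetElt_smul barH hC barH.toAddMonoidHom
    (fun y => show barH (y * _) = barH y * _ by rw [map_mul, ih]) hb
    fun i hi1 hi2 => hT.sg_mul_klLongest hi1 (by omega)
termination_by b

theorem klLongest_smul {a b : ℕ} (hb : b ≤ m) {x : M}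
    (hx : ∀ i : Fin m, a ≤ i → (i : ℕ) + 1 ≤ b → Tb (sg m i) • x = (T 1 : A) • x) :
    klLongest Tb a b • x = qfact (b + 1 - a) • x := by
  rcases le_or_gt b a with h | h
  · rw [hT.klLongest_of_le h, one_smul, qfact_of_le_one (by omega), one_smul]
  rw [hT.klLongest_eq_cosetElt_mul h hb, mul_smul,
    klLongest_smul (b := b - 1) (by omega) fun i hi1 hi2 => hx i hi1 (by omega), smul_comm,
    hT.cosetElt_smul_of_eigen hb hx, smul_smul, show b + 1 - a = b - 1 + 1 - a + 1 by omega,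
    qfact_succ, show b - 1 + 1 - a + 1 = b + 1 - a by omega]
termination_by b

end IsHeckeBasis

end Longest

lemma graphOp_basis_of_mem {m : ℕ} {Γ E : Type*} [AddCommGroup E] [Module A E]
    (Γb : Module.Basis Γ A E) (Lset : Γ → Set (Fin m)) (mu : Γ → Γ → ℤ) {i : Fin m} {γ : Γ}
    (h : i ∈ Lset γ) : graphOp Γb Lset mu i (Γb γ) = qtwo • Γb γ := by
  rw [graphOp, Module.Basis.constr_basis, if_pos h]

lemma basis_sg_smul_unit_of_mem {m : ℕ} {H : Type*} [Ring H] [Algebra A H]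
    {Tb : Module.Basis (SymGrp m) A H} {Γ E M : Type*} [AddCommGroup E] [Module A E]
    [AddCommGroup M] [Module A M] [Module H M] [IsScalarTower A H M] (Γb : Module.Basis Γ A E)
    (Lset : Γ → Set (Fin m)) (mu : Γ → Γ → ℤ) (unit : E →ₗ[A] M) {i : Fin m} {γ : Γ}
    (hbox : klSimple Tb i • unit (Γb γ) = unit (graphOp Γb Lset mu i (Γb γ)))
    (h : i ∈ Lset γ) : Tb (sg m i) • unit (Γb γ) = (T 1 : A) • unit (Γb γ) :=
  basis_sg_smul_eq_of_klSimple_smul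
    (hbox.trans (by rw [graphOp_basis_of_mem Γb Lset mu h, map_smul]))

end BkFormula

open BkFormula

theorem canonical_basis_element_bk_formula_general
    (m : ℕ)
    -- the Hecke algebra of `S_n` over `A`, with standard basis and bar involution
    (H : Type*) [Ring H] [Algebra A H] (Tb : Module.Basis (SymGrp m) A H)
    (hT1 : Tb 1 = 1)
    (hTmul : ∀ v w : SymGrp m, len (v * w) = len v + len w → Tb (v * w) = Tb v * Tb w)
    (hTquad : ∀ i : Fin m,
      Tb (sg m i) * Tb (sg m i) = (T 1 - T (-1) : A) • Tb (sg m i) + 1)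
    (barH : H →+* H)
    (hbarH_smul : ∀ (a : A) (h : H), barH (a • h) = Abar a • barH h)
    (hbarH_T : ∀ w : SymGrp m, barH (Tb w) * Tb w⁻¹ = 1 ∧ Tb w⁻¹ * barH (Tb w) = 1)
    -- the Kazhdan–Lusztig basis `{C′_w}` of `H`
    (Cb : SymGrp m → H) (hCb : IsCanonicalBasis (⇑barH) (⇑Tb) Cb)
    -- `J = J_{n−1} = {s₁, …, s_{n−2}}`
    (Jset : Set (Fin m))
    -- a `W_J`-graph `Γ`, giving `E = AΓ` with its bar involution fixing `Γ`
    {Γ : Type*} (E : Type*) [AddCommGroup E] [Module A E] (Γb : Module.Basis Γ A E)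
    (Lset : Γ → Set (Fin m)) (mu : Γ → Γ → ℤ)
    (hLJ : ∀ γ, Lset γ ⊆ Jset)
    (barE : E →+ E)
    (hbarE_fix : ∀ γ : Γ, barE (Γb γ) = Γb γ)
    -- the induced module `Ẽ = H ⊗_{H_J} AΓ`: an `H`-module with a balanced unit map
    -- `e ↦ 1 ⊠ e`, on which `T_s ⊠ (⋅)` matches the `W_J`-graph action for `s ∈ J`
    (tE : Type*) [AddCommGroup tE] [Module A tE] [Module H tE] [IsScalarTower A H tE]
    (unit : E →ₗ[A] tE)
    (hbox : ∀ i ∈ Jset, ∀ e : E,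
      (Tb (sg m i) + (T (-1) : A) • 1) • unit e = unit (graphOp Γb Lset mu i e))
    -- its bar involution, `bar (h ⊠ e) = bar h ⊠ bar e`
    (barT : tE →+ tE)
    (hbarT_box : ∀ (h : H) (e : E), barT (h • unit e) = barH h • unit (barE e))
    -- the Howlett–Yin canonical basis of `Ẽ`, w.r.t. the standard basis `T_w ⊠ γ`, `w ∈ W^J`
    (hbmin : ∀ k : ℕ, IsMinLeft Jset (bElt m k))
    (c : {w : SymGrp m // IsMinLeft Jset w} × Γ → tE)
    (hc : IsCanonicalBasis (⇑barT) (fun p : {w : SymGrp m // IsMinLeft Jset w} × Γ =>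
      Tb p.1.1 • unit (Γb p.2)) c)
    -- the data of the statement: `k`, `K = {s_k, …, s_{n−2}}`, `γ` with `K ⊆ L(γ)`,
    -- and `w₀(K)` the longest element of `W_K`
    (k : ℕ) (hk1 : 1 ≤ k) (hk : k ≤ m)
    (Kset : Set (Fin m)) (hKset : Kset = {i : Fin m | k ≤ (i : ℕ) + 1 ∧ (i : ℕ) + 1 ≤ m - 1})
    (γ : Γ) (hKL : Kset ⊆ Lset γ)
    (w0K : SymGrp m) (hw0K : w0K ∈ parab m Kset) (hw0Kmax : ∀ v ∈ parab m Kset, len v ≤ len w0K) :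
    c ⟨⟨bElt m k, hbmin k⟩, γ⟩ =
        ∑ j ∈ Finset.Icc k (m + 1), (T ((k : ℤ) - (j : ℤ)) : A) • (Tb (bElt m j) • unit (Γb γ))
      ∧ qfact (m + 1 - k) • c ⟨⟨bElt m k, hbmin k⟩, γ⟩ =
          Cb (bElt m k * w0K) • unit (Γb γ) := by
  have hT : IsHeckeBasis Tb := ⟨hT1, hTmul, hTquad⟩
  have hC : ∀ i, barH (klSimple Tb i) = klSimple Tb i := fun i =>
    hT.bar_klSimple barH hbarH_smul (by simpa [sg] using (hbarH_T (sg m i)).1)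
  have hK : Kset = {i : Fin m | k - 1 ≤ (i : ℕ) ∧ (i : ℕ) + 1 ≤ m - 1} := by
    rw [hKset]
    ext i
    exact ⟨fun ⟨h1, h2⟩ => ⟨by omega, h2⟩, fun ⟨h1, h2⟩ => ⟨by omega, h2⟩⟩
  set x := unit (Γb γ)
  have hx : ∀ i : Fin m, k - 1 ≤ i → (i : ℕ) + 1 ≤ m - 1 → Tb (sg m i) • x = (T 1 : A) • x :=
    fun i hi1 hi2 =>
      have hiL := hKL (hK ▸ ⟨hi1, hi2⟩)
      basis_sg_smul_unit_of_mem Γb Lset mu unit (hbox i (hLJ γ hiL) _) hiL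
  have hpart1 : c ⟨⟨bElt m k, hbmin k⟩, γ⟩ = cosetElt Tb (k - 1) m • x := by
    refine hc.apply_eq (hT.bar_cosetElt_smul barH hC barT (fun h => by rw [hbarT_box, hbarE_fix])
      le_rfl fun i hi1 hi2 => hx i hi1 (by omega)) ?_
    rw [← sum_bElt_smul_eq hk1]
    exact sum_T_smul_sub_mem_uinvLattice (t := fun p : {w : SymGrp m // IsMinLeft Jset w} × Γ =>
      Tb p.1.1 • unit (Γb p.2)) (f := fun j => (⟨bElt m j, hbmin j⟩, γ)) (by omega)
  have hCb : Cb (bElt m k * w0K) = klLongest Tb (k - 1) m := by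
    rw [hK] at hw0K hw0Kmax
    rw [eq_blockRev_of_forall_len_le (by omega) hw0K hw0Kmax, bElt_eq_cycleIcc hk1,
      ← blockRev_eq_cycleIcc_mul (by omega) le_rfl]
    exact hCb.apply_eq (hT.bar_klLongest barH hC le_rfl) (klLongest_sub_mem_uinvLattice le_rfl)
  refine ⟨hpart1.trans (sum_bElt_smul_eq hk1 x).symm, ?_⟩
  rw [hpart1, hCb, hT.klLongest_eq_cosetElt_mul (by omega) le_rfl, mul_smul,
    hT.klLongest_smul (by omega) hx, smul_comm, show m - 1 + 1 - (k - 1) = m + 1 - k by omega]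

theorem canonical_basis_element_bk_formula
    (m : ℕ) (hm : 1 ≤ m)
    -- the Hecke algebra of `S_n` over `A`, with standard basis and bar involution
    (H : Type*) [Ring H] [Algebra A H] (Tb : Module.Basis (SymGrp m) A H)
    (hT1 : Tb 1 = 1)
    (hTmul : ∀ v w : SymGrp m, len (v * w) = len v + len w → Tb (v * w) = Tb v * Tb w)
    (hTquad : ∀ i : Fin m,
      Tb (sg m i) * Tb (sg m i) = (T 1 - T (-1) : A) • Tb (sg m i) + 1)
    (barH : H →+* H)
    (hbarH_smul : ∀ (a : A) (h : H), barH (a • h) = Abar a • barH h)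
    (hbarH_T : ∀ w : SymGrp m, barH (Tb w) * Tb w⁻¹ = 1 ∧ Tb w⁻¹ * barH (Tb w) = 1)
    -- the Kazhdan–Lusztig basis `{C′_w}` of `H`
    (Cb : SymGrp m → H) (hCb : IsCanonicalBasis (⇑barH) (⇑Tb) Cb)
    -- `J = J_{n−1} = {s₁, …, s_{n−2}}`
    (Jset : Set (Fin m)) (hJ : Jset = {i : Fin m | (i : ℕ) + 1 ≤ m - 1})
    -- a `W_J`-graph `Γ`, giving `E = AΓ` with its bar involution fixing `Γ`
    {Γ : Type*} (E : Type*) [AddCommGroup E] [Module A E] (Γb : Module.Basis Γ A E)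
    (Lset : Γ → Set (Fin m)) (mu : Γ → Γ → ℤ)
    (hLJ : ∀ γ, Lset γ ⊆ Jset)
    (hmufin : ∀ γ : Γ, {δ : Γ | mu δ γ ≠ 0}.Finite)
    (barE : E →+ E) (hbarE_smul : ∀ (a : A) (e : E), barE (a • e) = Abar a • barE e)
    (hbarE_fix : ∀ γ : Γ, barE (Γb γ) = Γb γ)
    -- the induced module `Ẽ = H ⊗_{H_J} AΓ`: an `H`-module with a balanced unit map
    -- `e ↦ 1 ⊠ e`, on which `T_s ⊠ (⋅)` matches the `W_J`-graph action for `s ∈ J`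
    (tE : Type*) [AddCommGroup tE] [Module A tE] [Module H tE] [IsScalarTower A H tE]
    (unit : E →ₗ[A] tE)
    (hbox : ∀ i ∈ Jset, ∀ e : E,
      (Tb (sg m i) + (T (-1) : A) • 1) • unit e = unit (graphOp Γb Lset mu i e))
    -- its bar involution, `bar (h ⊠ e) = bar h ⊠ bar e`
    (barT : tE →+ tE)
    (hbarT_smul : ∀ (a : A) (x : tE), barT (a • x) = Abar a • barT x)
    (hbarT_box : ∀ (h : H) (e : E), barT (h • unit e) = barH h • unit (barE e))
    -- the Howlett–Yin canonical basis of `Ẽ`, w.r.t. the standard basis `T_w ⊠ γ`, `w ∈ W^J`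
    (hbmin : ∀ k : ℕ, IsMinLeft Jset (bElt m k))
    (c : {w : SymGrp m // IsMinLeft Jset w} × Γ → tE)
    (hc : IsCanonicalBasis (⇑barT) (fun p : {w : SymGrp m // IsMinLeft Jset w} × Γ =>
      Tb p.1.1 • unit (Γb p.2)) c)
    -- the data of the statement: `k`, `K = {s_k, …, s_{n−2}}`, `γ` with `K ⊆ L(γ)`,
    -- and `w₀(K)` the longest element of `W_K`
    (k : ℕ) (hk1 : 1 ≤ k) (hk : k ≤ m)
    (Kset : Set (Fin m)) (hKset : Kset = {i : Fin m | k ≤ (i : ℕ) + 1 ∧ (i : ℕ) + 1 ≤ m - 1})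
    (γ : Γ) (hKL : Kset ⊆ Lset γ)
    (w0K : SymGrp m) (hw0K : w0K ∈ parab m Kset) (hw0Kmax : ∀ v ∈ parab m Kset, len v ≤ len w0K) :
    c ⟨⟨bElt m k, hbmin k⟩, γ⟩ =
        ∑ j ∈ Finset.Icc k (m + 1), (T ((k : ℤ) - (j : ℤ)) : A) • (Tb (bElt m j) • unit (Γb γ))
      ∧ qfact (m + 1 - k) • c ⟨⟨bElt m k, hbmin k⟩, γ⟩ =
          Cb (bElt m k * w0K) • unit (Γb γ) :=
  canonical_basis_element_bk_formula_general m H Tb hT1 hTmul hTquad barH hbarH_smul hbarH_T Cb hCb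
    Jset E Γb Lset mu hLJ barE hbarE_fix tE unit hbox barT hbarT_box hbmin c hc k hk1 hk Kset hKset
    γ hKL w0K hw0K hw0Kmax

end
end

section
/- Let Λ be a W-graph for a Coxeter system (W,S) and s ∈ S. Then the kernel of the additive map m_{C_s − [2]} : AΛ → AΛ (left multiplication by C_s − [2]) is exactly AΛ⁻_s, the A-span of the vertices whose descent set contains s. If moreover s commutes with every t ∈ S, then for any H-module F the map m_{C_s − [2]} : F → F is an H-module homomorphism. Consequently, for W = S_n and any W_{S∖s₂}-graph Λ, AΛ⁻_{s₁} is a cellular submodule of AΛ. -/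
/-!
# Statement 16 (Lemma: the kernel of multiplication by `C_s − [2]` on a W-graph)

`A = ℤ[u,u⁻¹]`, `[2] = u + u⁻¹`, `H` is the Hecke algebra of a Coxeter system `(W,S)` with
standard basis `{T_w}` and `C_s = T_s + u⁻¹`.  A `W`-graph `Λ` (vertices with edge weights
`μ(δ,γ) ∈ ℤ` and descent sets `L(γ) ⊆ S`) makes `AΛ = Λ →₀ A` into a left `H`-module where
`C_s` acts by `C_s γ = [2] γ` if `s ∈ L(γ)` and `C_s γ = ∑_{δ : s ∈ L(δ)} μ(δ,γ) δ`
otherwise.  `Λ⁻_s = {γ : s ∈ L(γ)}`.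

Claims: (1) the kernel of `m_{C_s − [2]} : AΛ → AΛ` is exactly `A Λ⁻_s`;
(2) if `s` commutes with every `t ∈ S` then `m_{C_s − [2]} : F → F` is an `H`-module
homomorphism for every `H`-module `F`;
(3) consequently, for `W = S_n` and any `W_{S∖s₂}`-graph `Λ` (encoded by its vertex data
together with the Hecke relations satisfied by the `W`-graph operators), `A Λ⁻_{s₁}` is a
cellular submodule of `AΛ`, i.e. the span of `Λ⁻_{s₁}` is stable under all the `W_{S∖s₂}`-graph
operators `C_t`, `t ∈ S∖s₂`.  (Simple reflections of `S_n` are indexed by `Fin m`, `n = m+1`,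
with `s₁, s₂` corresponding to the indices `0, 1`.)
-/

noncomputable section
open LaurentPolynomial
open scoped Classical

/-- The value of the `W`-graph operator `C_s` on a basis vertex `γ`:
`[2]·γ` if `s ∈ L γ`, and `∑_{δ : s ∈ L δ} μ(δ,γ)·δ` otherwise. -/
def wgValue {B V : Type*} (mu : V → V → ℤ) (L : V → Set B) (i : B) (γ : V) : V →₀ A :=
  if i ∈ L γ then qtwo • Finsupp.single γ (1 : A)
  else ∑ᶠ δ ∈ {δ : V | i ∈ L δ}, mu δ γ • Finsupp.single δ (1 : A)

/-- The `W`-graph operator `C_s` on `AΛ = Λ →₀ A`, extended `A`-linearly from `wgValue`. -/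
def wgOp {B V : Type*} (mu : V → V → ℤ) (L : V → Set B) (i : B) :
    (V →₀ A) →ₗ[A] (V →₀ A) :=
  Finsupp.lsum A fun γ => LinearMap.toSpanSingleton A _ (wgValue mu L i γ)

/-- The span `A Λ⁻_s` of the vertices whose descent set contains `s` (index `i`). -/
def descentSpan {B V : Type*} (L : V → Set B) (i : B) : Submodule A (V →₀ A) :=
  Submodule.span A {y | ∃ γ : V, i ∈ L γ ∧ y = Finsupp.single γ (1 : A)}

/-!
On a `W`-graph module, `C_s` maps everything into `A Λ⁻_s` and acts there as `[2]`; since `[2]`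
is not a zero divisor in `A`, a vector fixed up to `[2]` by `C_s` already lies in `A Λ⁻_s`.
If `s` is central in `W`, then `T_s` is central in `H`: for `ℓ(sw) > ℓ(w)` both `T_s T_w` and
`T_w T_s` equal `T_{sw} = T_{ws}`, and otherwise `T_w = T_s T_{sw}` reduces to that case.
In `S_n`, `s₁` commutes with every generator of `W_{S∖s₂}`, so `C_{s₁}` commutes with the
`W_{S∖s₂}`-graph operators, which therefore preserve its `[2]`-eigenspace `A Λ⁻_{s₁}`.
-/

theorem Commute.of_sub_smul_one {R S : Type*} [CommSemiring R] [Ring S] [Algebra R S] {X Y : S}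
    {a b : R} (h : Commute (X - a • 1) (Y - b • 1)) : Commute X Y := by
  simpa using (h.add_left ((Commute.one_left _).smul_left a)).add_right
    ((Commute.one_right _).smul_right b)

lemma qtwo_ne_zero : qtwo ≠ 0 := by
  intro h
  simpa [qtwo] using congrArg (fun p : A => p.coeff 1) h

section WGraph

variable {B V : Type*} (mu : V → V → ℤ) (L : V → Set B) (i : B)

lemma descentSpan_eq_supported : descentSpan L i = Finsupp.supported A A {γ : V | i ∈ L γ} := by
  rw [Finsupp.supported_eq_span_single, descentSpan]
  congr 1
  ext y
  simp only [Set.mem_image, Set.mem_ofPred_eq, eq_comm]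

lemma single_mem_descentSpan {γ : V} (hγ : i ∈ L γ) :
    Finsupp.single γ (1 : A) ∈ descentSpan L i :=
  Submodule.subset_span ⟨γ, hγ, rfl⟩

lemma wgValue_mem_descentSpan (hmufin : ∀ γ : V, {δ : V | mu δ γ ≠ 0}.Finite) (γ : V) :
    wgValue mu L i γ ∈ descentSpan L i := by
  unfold wgValue
  split_ifs with hγ
  · exact Submodule.smul_mem _ _ (single_mem_descentSpan L i hγ)
  · have hfin : ({δ : V | i ∈ L δ} ∩
        Function.support fun δ => mu δ γ • Finsupp.single δ (1 : A)).Finite :=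
      (hmufin γ).subset fun δ ⟨_, hδ⟩ h0 => hδ (by simp [h0])
    rw [finsum_mem_eq_sum _ hfin]
    refine Submodule.sum_mem _ fun δ hδ => ?_
    rw [Set.Finite.mem_toFinset] at hδ
    exact zsmul_mem (single_mem_descentSpan L i hδ.1) _

lemma wgOp_single (γ : V) : wgOp mu L i (Finsupp.single γ (1 : A)) = wgValue mu L i γ := by
  simp [wgOp]

lemma eq_wgOp_of_apply_single {C : Module.End A (V →₀ A)}
    (hC : ∀ γ : V, C (Finsupp.single γ (1 : A)) = wgValue mu L i γ) : C = wgOp mu L i :=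
  Finsupp.lhom_ext' fun γ => LinearMap.ext_ring (by simp [hC, wgOp_single])

lemma wgOp_mem_descentSpan (hmufin : ∀ γ : V, {δ : V | mu δ γ ≠ 0}.Finite)
    (x : V →₀ A) : wgOp mu L i x ∈ descentSpan L i := by
  rw [wgOp, Finsupp.lsum_apply]
  exact Submodule.finsuppSum_mem _ _ _ _ fun γ _ =>
    Submodule.smul_mem _ _ (wgValue_mem_descentSpan mu L i hmufin γ)

theorem eigenspace_wgOp_qtwo (hmufin : ∀ γ : V, {δ : V | mu δ γ ≠ 0}.Finite) :
    Module.End.eigenspace (wgOp mu L i) qtwo = descentSpan L i := by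
  apply le_antisymm
  · intro x hx
    have hmem : qtwo • x ∈ descentSpan L i :=
      Module.End.mem_eigenspace_iff.mp hx ▸ wgOp_mem_descentSpan mu L i hmufin x
    rw [descentSpan_eq_supported, Finsupp.mem_supported] at hmem ⊢
    rwa [Finsupp.support_smul_eq qtwo_ne_zero] at hmem
  · rw [descentSpan, Submodule.span_le]
    rintro _ ⟨γ, hγ, rfl⟩
    rw [SetLike.mem_coe, Module.End.mem_eigenspace_iff, wgOp_single, wgValue, if_pos hγ]

end WGraph

section Hecke

variable {B W : Type*} [Group W] {M : CoxeterMatrix B} (cs : CoxeterSystem M W)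

theorem CoxeterSystem.simple_mul_comm_of_forall_simple {i : B}
    (hcomm : ∀ j : B, cs.simple i * cs.simple j = cs.simple j * cs.simple i) (w : W) :
    cs.simple i * w = w * cs.simple i := by
  have hcen : cs.simple i ∈ Subgroup.centralizer (Subgroup.closure (Set.range cs.simple)) := by
    rw [Subgroup.centralizer_closure, Subgroup.mem_centralizer_iff]
    rintro _ ⟨j, rfl⟩
    exact (hcomm j).symm
  rw [cs.subgroup_closure_range_simple] at hcen
  exact (Subgroup.mem_centralizer_iff.mp hcen w trivial).symm

variable {H : Type*} [Ring H] [Algebra A H] {Tb : Module.Basis W A H}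

lemma commute_basis_simple_of_mul_comm
    (hTmul : ∀ v w : W, cs.length (v * w) = cs.length v + cs.length w →
      Tb (v * w) = Tb v * Tb w) {i : B} {w : W}
    (hw : cs.simple i * w = w * cs.simple i) : Commute (Tb (cs.simple i)) (Tb w) := by
  have of_length_lt : ∀ v : W, cs.simple i * v = v * cs.simple i →
      cs.length (cs.simple i * v) = cs.length v + 1 → Commute (Tb (cs.simple i)) (Tb v) := by
    intro v hv hl
    rw [commute_iff_eq, ← hTmul _ _ (by rw [hl, cs.length_simple, add_comm]),
      ← hTmul _ _ (by rw [← hv, hl, cs.length_simple]), hv]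
  rcases cs.length_simple_mul w i with hl | hl
  · exact of_length_lt w hw hl
  · have hsv : cs.simple i * (cs.simple i * w) = w := cs.simple_mul_simple_cancel_left i
    have hv : cs.simple i * (cs.simple i * w) = cs.simple i * w * cs.simple i := by
      rw [hsv, mul_assoc, ← hw, ← mul_assoc, cs.simple_mul_simple_self, one_mul]
    have hTw := of_length_lt _ hv (by rw [hsv]; omega)
    rw [← hsv, hTmul _ _ (by rw [hsv, cs.length_simple]; omega)]
    exact (Commute.refl _).mul_right hTw

lemma commute_basis_simple
    (hTmul : ∀ v w : W, cs.length (v * w) = cs.length v + cs.length w →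
      Tb (v * w) = Tb v * Tb w) {i : B}
    (hcomm : ∀ j : B, cs.simple i * cs.simple j = cs.simple j * cs.simple i) (h : H) :
    Commute (Tb (cs.simple i)) h := by
  have hmul : LinearMap.mulLeft A (Tb (cs.simple i)) = LinearMap.mulRight A (Tb (cs.simple i)) :=
    Tb.ext fun w =>
      (commute_basis_simple_of_mul_comm cs hTmul (cs.simple_mul_comm_of_forall_simple hcomm w)).eq
  exact LinearMap.congr_fun hmul h

end Hecke

/-- **Statement 16.** -/
theorem kernel_of_Cs_minus_two_eq_descent_span
    -- a Coxeter system `(W, S)`, simple reflections indexed by `B`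
    {B W : Type*} [Group W] (M : CoxeterMatrix B) (cs : CoxeterSystem M W)
    -- its Hecke algebra `H` over `A`, with standard basis `{T_w}` and the Hecke relations
    (H : Type*) [Ring H] [Algebra A H] (Tb : Module.Basis W A H)
    (hTmul : ∀ v w : W, cs.length (v * w) = cs.length v + cs.length w →
      Tb (v * w) = Tb v * Tb w)
    -- a `W`-graph `Λ`: vertex set `V`, edge weights `mu`, descent sets `L`, such that the
    -- `W`-graph formulas define a left `H`-module structure `ρ` on `AΛ = V →₀ A`
    {V : Type*} (mu : V → V → ℤ) (L : V → Set B)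
    (hmufin : ∀ γ : V, {δ : V | mu δ γ ≠ 0}.Finite)
    (ρ : H →ₐ[A] Module.End A (V →₀ A))
    (hρ : ∀ (i : B) (γ : V),
      ρ (Tb (cs.simple i) + (T (-1) : A) • 1) (Finsupp.single γ (1 : A)) = wgValue mu L i γ) :
    -- (1) the kernel of multiplication by `C_s − [2]` on `AΛ` is exactly `A Λ⁻_s`
    (∀ (i : B) (x : V →₀ A),
      ρ (Tb (cs.simple i) + (T (-1) : A) • 1) x = qtwo • x ↔ x ∈ descentSpan L i) ∧
    -- (2) if `s` commutes with every `t ∈ S`, then for any `H`-module `F`, multiplication by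
    -- `C_s − [2]` is an `H`-module homomorphism
    (∀ i : B, (∀ j : B, cs.simple i * cs.simple j = cs.simple j * cs.simple i) →
      ∀ (F : Type) [AddCommGroup F] [Module H F], ∀ (h : H) (x : F),
        (Tb (cs.simple i) + (T (-1) : A) • 1 - qtwo • 1) • (h • x) =
          h • ((Tb (cs.simple i) + (T (-1) : A) • 1 - qtwo • 1) • x)) ∧
    -- (3) for `W = S_n` (simples indexed by `Fin m`, `s₁ ↔ 0`, `s₂ ↔ 1`) and any
    -- `W_{S∖s₂}`-graph `Λ'` — vertex data whose operators satisfy the type `A` Hecke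
    -- relations of the parabolic subgroup `W_{S∖s₂}` — the span `A Λ'⁻_{s₁}` is stable
    -- under every `W_{S∖s₂}`-graph operator `C_t`, `t ∈ S∖s₂`: a cellular submodule of `AΛ'`
    (∀ (m : ℕ) (hm : 2 ≤ m) (V' : Type) (mu' : V' → V' → ℤ) (L' : V' → Set (Fin m)),
      (∀ γ : V', {δ : V' | mu' δ γ ≠ 0}.Finite) →
      (∀ (γ : V') (i : Fin m), i ∈ L' γ → i ≠ ⟨1, by omega⟩) →
      (∀ i : Fin m, i ≠ ⟨1, by omega⟩ →
        (wgOp mu' L' i - (T (-1) : A) • 1) * (wgOp mu' L' i - (T (-1) : A) • 1) =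
          (T 1 - T (-1) : A) • (wgOp mu' L' i - (T (-1) : A) • 1) + 1) →
      (∀ i j : Fin m, i ≠ ⟨1, by omega⟩ → j ≠ ⟨1, by omega⟩ → (j : ℕ) = (i : ℕ) + 1 →
        (wgOp mu' L' i - (T (-1) : A) • 1) * (wgOp mu' L' j - (T (-1) : A) • 1)
            * (wgOp mu' L' i - (T (-1) : A) • 1) =
          (wgOp mu' L' j - (T (-1) : A) • 1) * (wgOp mu' L' i - (T (-1) : A) • 1)
            * (wgOp mu' L' j - (T (-1) : A) • 1)) →
      (∀ i j : Fin m, i ≠ ⟨1, by omega⟩ → j ≠ ⟨1, by omega⟩ → (i : ℕ) + 1 < (j : ℕ) →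
        (wgOp mu' L' i - (T (-1) : A) • 1) * (wgOp mu' L' j - (T (-1) : A) • 1) =
          (wgOp mu' L' j - (T (-1) : A) • 1) * (wgOp mu' L' i - (T (-1) : A) • 1)) →
      ∀ i : Fin m, i ≠ ⟨1, by omega⟩ →
        ∀ x ∈ descentSpan L' (⟨0, by omega⟩ : Fin m),
          wgOp mu' L' i x ∈ descentSpan L' (⟨0, by omega⟩ : Fin m)) := by
  refine ⟨fun i x => ?_, fun i hcomm F _ _ h x => ?_, ?_⟩
  · rw [eq_wgOp_of_apply_single mu L i (hρ i), ← Module.End.mem_eigenspace_iff,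
      eigenspace_wgOp_qtwo mu L i hmufin]
  · have hscalar (a : A) : Commute (a • 1 : H) h := (Commute.one_left h).smul_left a
    have hC : Commute (Tb (cs.simple i) + (T (-1) : A) • 1 - qtwo • 1) h :=
      ((commute_basis_simple cs hTmul hcomm h).add_left (hscalar _)).sub_left (hscalar _)
    rw [← mul_smul, hC.eq, mul_smul]
  · intro m hm V' mu' L' hmufin' _ _ _ hcomm i hi x hx
    have hC : Commute (wgOp mu' L' ⟨0, by omega⟩) (wgOp mu' L' i) := by
      by_cases h0 : i = ⟨0, by omega⟩
      · rw [h0]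
      · have hsub : Commute _ _ := hcomm ⟨0, by omega⟩ i (by simp [Fin.ext_iff]) hi
          (by simp only [ne_eq, Fin.ext_iff] at h0 hi ⊢; omega)
        exact Commute.of_sub_smul_one (R := A) (S := Module.End A (V' →₀ A)) hsub
    rw [← eigenspace_wgOp_qtwo mu' L' _ hmufin'] at hx ⊢
    exact Module.End.mapsTo_genEigenspace_of_comm hC qtwo 1 hx
end
end
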